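/- arXiv:1511.00763 — 8 statements merged into one kernel-verified Lean document; each statement's English description precedes it below -/
import Mathlib

section
/- If X and Y are fractional ideals of an order R in a number field with XY = R, then X is generated as an R-module by at most two elements. -/
/-- The colon (quotient) of two `ℤ`-submodules of a field `K`:
`(J : I) = {x ∈ K : x I ⊆ J}`. -/
def colonSub {K : Type*} [Field K] (J I : Submodule ℤ K) : Submodule ℤ K where
  carrier := {x : K | ∀ y ∈ I, x * y ∈ J}
  add_mem' := by
    intro a b ha hb y hy
    have := J.add_mem (ha y hy) (hb y hy)
    simpa [add_mul] using this
  zero_mem' := by intro y hy; simp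
  smul_mem' := by
    intro c x hx y hy
    rw [smul_mul_assoc]
    exact J.smul_mem c (hx y hy)

/-- An order in a number field `K`: a subring of `K` which is a finitely generated
`ℤ`-module of full rank (it spans `K` over `ℚ`). -/
structure IsOrder {K : Type*} [Field K] [Algebra ℚ K] (R : Submodule ℤ K) : Prop where
  one_mem : (1 : K) ∈ R
  mul_le : R * R ≤ R
  fg : R.FG
  spans : Submodule.span ℚ (R : Set K) = ⊤

/-- A fractional ideal of the order `R`: a nonzero finitely generated `ℤ`-submodule of `K`
stable under multiplication by `R`. -/
def IsFracIdealOf {K : Type*} [Field K] (R I : Submodule ℤ K) : Prop :=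
  I ≠ ⊥ ∧ I.FG ∧ R * I ≤ I

/-!
Replacing `Y` by `RY` we may assume `Y` is an `R`-module. Pick `a ≠ 0` in `X`. Then `aY` is a
nonzero ideal of `R`, so it has finite index and lies in only finitely many maximal ideals `M`.
As `XY = R`, each such `M` misses some product `x_M y_M`; with Chinese-remainder weights
`e_M ∈ ⋂_{N ≠ M} N \ M`, the element `b = ∑ e_M x_M ∈ X` satisfies `b y_M ≡ e_M x_M y_M ∉ M`.
Hence `aY + bY = R` and `X = X (aY + bY) = aR + bR`.
-/

open Submodule

theorem Ideal.finite_setOf_le_of_finite_quotient {A : Type*} [CommRing A] (J : Ideal A)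
    [Finite (A ⧸ J)] : {M : Ideal A | J ≤ M}.Finite := by
  have e := Ideal.relIsoOfSurjective (Ideal.Quotient.mk J) Ideal.Quotient.mk_surjective
  rw [← RingHom.ker_eq_comap_bot, Ideal.mk_ker] at e
  exact Set.finite_coe_iff.mp (Finite.of_equiv _ e.toEquiv)

theorem Ideal.exists_notMem_forall_mem_of_ne {A : Type*} [CommRing A] {s : Finset (Ideal A)}
    (hs : ∀ N ∈ s, N.IsMaximal) {M : Ideal A} (hM : M ∈ s) :
    ∃ e ∉ M, ∀ N ∈ s, N ≠ M → e ∈ N := by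
  classical
  have hinf : ¬ (s.erase M).inf id ≤ M := by
    rw [(hs M hM).isPrime.inf_le']
    rintro ⟨N, hN, hNM⟩
    exact Finset.ne_of_mem_erase hN ((hs N (Finset.mem_of_mem_erase hN)).eq_of_le
      (hs M hM).ne_top hNM)
  obtain ⟨e, he, heM⟩ := SetLike.not_le_iff_exists.mp hinf
  exact ⟨e, heM, fun N hN hNM => Finset.inf_le (f := id) (Finset.mem_erase.mpr ⟨hNM, hN⟩) he⟩

theorem Subalgebra.restrictScalars_span_eq_toSubmodule_mul {R A : Type*} [CommSemiring R]
    [CommSemiring A] [Algebra R A] (S : Subalgebra R A) (N : Submodule R A) :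
    (span S (N : Set A)).restrictScalars R = Subalgebra.toSubmodule S * N := by
  refine le_antisymm (fun x hx => ?_) (mul_le.mpr fun s hs n hn => ?_)
  · induction hx using span_induction with
    | mem n hn =>
      simpa using mul_mem_mul (show (1 : A) ∈ Subalgebra.toSubmodule S from S.one_mem) hn
    | zero => exact zero_mem _
    | add _ _ _ _ hx hy => exact add_mem hx hy
    | smul s x _ hx =>
      have hle : Subalgebra.toSubmodule S * (Subalgebra.toSubmodule S * N) ≤
          Subalgebra.toSubmodule S * N := by
        rw [← mul_assoc, (Subalgebra.isIdempotentElem_toSubmodule S).eq]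
      exact hle (mul_mem_mul s.2 hx)
  · exact (span S (N : Set A)).smul_mem ⟨s, hs⟩ (subset_span hn)

namespace Submodule

variable {A B : Type*} [CommRing A] [CommRing B] [Algebra A B]

theorem comap_span_singleton_mul_ne_bot [IsDomain B] {X Y : Submodule A B} (hXY : X * Y = 1)
    {a : B} (ha : a ∈ X) (ha0 : a ≠ 0) : (span A {a} * Y).comap (Algebra.linearMap A B) ≠ ⊥ := by
  have hY : Y ≠ ⊥ := by
    rintro rfl
    rw [mul_bot] at hXY
    exact one_ne_zero (mem_bot A |>.mp (hXY ▸ one_le.mp le_rfl : (1 : B) ∈ (⊥ : Submodule A B)))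
  obtain ⟨y, hy, hy0⟩ := Y.ne_bot_iff.mp hY
  obtain ⟨c, hc⟩ := mem_one.mp (hXY ▸ mul_mem_mul ha hy)
  refine (Submodule.ne_bot_iff _).mpr ⟨c, ?_, fun hc0 => ?_⟩
  · exact show algebraMap A B c ∈ _ from hc ▸ mul_mem_mul (mem_span_singleton_self a) hy
  · exact mul_ne_zero ha0 hy0 (by rw [← hc, hc0, map_zero])

variable [FaithfulSMul A B]

theorem exists_mul_eq_algebraMap_notMem_of_mul_eq_one {X Y : Submodule A B} (hXY : X * Y = 1)
    {M : Ideal A} (hM : M ≠ ⊤) :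
    ∃ x ∈ X, ∃ y ∈ Y, ∃ c ∉ M, algebraMap A B c = x * y := by
  by_contra! h
  have hle : X * Y ≤ map (Algebra.linearMap A B) M := mul_le.mpr fun x hx y hy => by
    obtain ⟨c, hc⟩ := mem_one.mp (hXY ▸ mul_mem_mul hx hy)
    exact ⟨c, by_contra fun hcM => h x hx y hy c hcM hc, hc⟩
  obtain ⟨m, hm, hm1⟩ := hle (hXY ▸ one_le.mp le_rfl)
  have : m = 1 := FaithfulSMul.algebraMap_injective A B (hm1.trans (map_one _).symm)
  exact hM ((M.eq_top_iff_one).mpr (this ▸ hm))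

theorem exists_mem_sup_comap_span_singleton_mul_eq_top {X Y : Submodule A B} (hXY : X * Y = 1)
    {J : Ideal A} (hJ : {M : Ideal A | J ≤ M ∧ M.IsMaximal}.Finite) :
    ∃ b ∈ X, J ⊔ (span A {b} * Y).comap (Algebra.linearMap A B) = ⊤ := by
  classical
  set s := hJ.toFinset
  have hs : ∀ M ∈ s, J ≤ M ∧ M.IsMaximal := fun M hM => hJ.mem_toFinset.mp hM
  choose! x hx y hy c hc hxy using fun M (hM : M ∈ s) =>
    exists_mul_eq_algebraMap_notMem_of_mul_eq_one hXY (hs M hM).2.ne_top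
  choose! e he heN using fun M (hM : M ∈ s) =>
    Ideal.exists_notMem_forall_mem_of_ne (fun N hN => (hs N hN).2) hM
  set b := ∑ M ∈ s, e M • x M
  refine ⟨b, sum_mem fun M hM => X.smul_mem _ (hx M hM), ?_⟩
  by_contra hne
  obtain ⟨M, hMmax, hle⟩ := Ideal.exists_le_maximal _ hne
  have hMs : M ∈ s := hJ.mem_toFinset.mpr ⟨le_sup_left.trans hle, hMmax⟩
  choose! d hd using fun N (hN : N ∈ s) => mem_one.mp (hXY ▸ mul_mem_mul (hx N hN) (hy M hMs))
  have hsum : algebraMap A B (∑ N ∈ s, e N * d N) = b * y M := by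
    rw [map_sum, Finset.sum_mul]
    refine Finset.sum_congr rfl fun N hN => ?_
    rw [map_mul, hd N hN, Algebra.smul_def, mul_assoc]
  have hmem : ∑ N ∈ s, e N * d N ∈ M :=
    hle (le_sup_right (a := J) (show _ ∈ span A {b} * Y from
      hsum ▸ mul_mem_mul (mem_span_singleton_self b) (hy M hMs)))
  rw [← Finset.add_sum_erase s _ hMs, Submodule.add_mem_iff_left _ (sum_mem fun N hN =>
    M.mul_mem_right _ (heN N (Finset.mem_of_mem_erase hN) M hMs
      (Finset.ne_of_mem_erase hN).symm))] at hmem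
  have hdc : d M = c M := FaithfulSMul.algebraMap_injective A B ((hd M hMs).trans (hxy M hMs).symm)
  exact hc M hMs (hdc ▸ (hMmax.isPrime.mem_or_mem hmem).resolve_left (he M hMs))

theorem exists_eq_span_pair_of_mul_eq_one {X Y : Submodule A B} (hXY : X * Y = 1) {a : B}
    (ha : a ∈ X)
    (hfin : {M : Ideal A |
      (span A {a} * Y).comap (Algebra.linearMap A B) ≤ M ∧ M.IsMaximal}.Finite) :
    ∃ b, X = span A {a, b} := by
  obtain ⟨b, hb, htop⟩ := exists_mem_sup_comap_span_singleton_mul_eq_top hXY hfin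
  have hab : span A {a, b} * Y = 1 := by
    refine le_antisymm (hXY ▸ mul_le_mul_left (span_le.mpr ?_) Y) (one_le.mpr ?_)
    · have hle : (span A {a} * Y).comap (Algebra.linearMap A B) ⊔
          (span A {b} * Y).comap (Algebra.linearMap A B) ≤
          (span A {a, b} * Y).comap (Algebra.linearMap A B) :=
        sup_le (comap_mono (mul_le_mul_left (span_mono (by simp)) Y))
          (comap_mono (mul_le_mul_left (span_mono (by simp)) Y))
      simpa using hle (htop ▸ mem_top : (1 : A) ∈ _)
    · exact Set.insert_subset ha (Set.singleton_subset_iff.mpr hb)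
  refine ⟨b, ?_⟩
  calc X = X * (span A {a, b} * Y) := by rw [hab, mul_one]
    _ = span A {a, b} * (X * Y) := mul_left_comm _ _ _
    _ = span A {a, b} := by rw [hXY, mul_one]

end Submodule

namespace IsOrder

variable {K : Type*} [Field K] [Algebra ℚ K] {R : Submodule ℤ K}

def toSubalgebra (hR : IsOrder R) : Subalgebra ℤ K :=
  R.toSubalgebra hR.one_mem fun _ _ hx hy => hR.mul_le (mul_mem_mul hx hy)

theorem mul_eq_self (hR : IsOrder R) {N : Submodule ℤ K} (hN : R * N ≤ N) : R * N = N :=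
  le_antisymm hN fun x hx => by simpa using mul_mem_mul hR.one_mem hx

theorem restrictScalars_one (hR : IsOrder R) :
    (1 : Submodule hR.toSubalgebra K).restrictScalars ℤ = R := by
  ext x
  rw [restrictScalars_mem, mem_one]
  exact ⟨fun ⟨y, hy⟩ => hy ▸ y.2, fun hx => ⟨⟨x, hx⟩, rfl⟩⟩

theorem restrictScalars_span (hR : IsOrder R) (N : Submodule ℤ K) :
    (span hR.toSubalgebra (N : Set K)).restrictScalars ℤ = R * N :=
  Subalgebra.restrictScalars_span_eq_toSubmodule_mul _ N

theorem finite_quotient (hR : IsOrder R) {J : Ideal hR.toSubalgebra} (hJ : J ≠ ⊥) :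
    Finite (hR.toSubalgebra ⧸ J) := by
  have := algebraRat.charZero K
  have : Module.Finite ℤ hR.toSubalgebra := Module.Finite.iff_fg.mpr hR.fg
  exact J.finiteQuotientOfFreeOfNeBot hJ

end IsOrder

theorem stmt0_general {K : Type*} [Field K] [NumberField K]
    (R X Y : Submodule ℤ K) (hR : IsOrder R)
    (hX : IsFracIdealOf R X)
    (hXY : X * Y = R) :
    ∃ a b : K, X = R * Submodule.span ℤ {a, b} := by
  set S := hR.toSubalgebra
  have hXY' : span S (X : Set K) * span S (Y : Set K) = 1 := by
    apply restrictScalars_injective ℤ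
    rw [restrictScalars_mul, hR.restrictScalars_span, hR.restrictScalars_span,
      hR.mul_eq_self hX.2.2, mul_left_comm, hXY, hR.mul_eq_self hR.mul_le, hR.restrictScalars_one]
  obtain ⟨a, haX, ha0⟩ := X.ne_bot_iff.mp hX.1
  have := hR.finite_quotient (comap_span_singleton_mul_ne_bot hXY' (subset_span haX) ha0)
  obtain ⟨b, hb⟩ := exists_eq_span_pair_of_mul_eq_one hXY' (subset_span haX)
    ((Ideal.finite_setOf_le_of_finite_quotient _).subset fun M hM => hM.1)
  refine ⟨a, b, ?_⟩
  calc X = (span S (X : Set K)).restrictScalars ℤ := by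
        rw [hR.restrictScalars_span, hR.mul_eq_self hX.2.2]
    _ = (span S (span ℤ {a, b} : Set K)).restrictScalars ℤ := by rw [hb, span_span_of_tower]
    _ = R * span ℤ {a, b} := hR.restrictScalars_span _

/-- If `X` and `Y` are fractional ideals of an order `R` in a number field with `XY = R`,
then `X` is generated as an `R`-module by at most two elements. -/
theorem stmt0 {K : Type*} [Field K] [NumberField K]
    (R X Y : Submodule ℤ K) (hR : IsOrder R)
    (hX : IsFracIdealOf R X) (hY : IsFracIdealOf R Y)
    (hXY : X * Y = R) :
    ∃ a b : K, X = R * Submodule.span ℤ {a, b} :=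
  stmt0_general R X Y hR hX hXY
end

section
/- Let θ be an algebraic integer of degree n > 2, R₀ = Z[θ], I = Z + Zθ + 2Zθ² + ... + 2Zθ^{n-1}, and R = Z + 2Zθ + ... + 2Zθ^{n-1}. Then R = (I:I), i.e., R is the coefficient ring of I. -/
/-- The `ℤ`-module `ℤ + ℤθ + ⋯ + ℤθ^k + 2ℤθ^{k+1} + ⋯ + 2ℤθ^{n-1}`. -/
noncomputable def mixedSpan {K : Type*} [Field K] (θ : K) (n k : ℕ) : Submodule ℤ K :=
  Submodule.span ℤ (Set.range fun i : Fin n =>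
    (if (i : ℕ) ≤ k then 1 else 2) * θ ^ (i : ℕ))

/-- The order `R = ℤ + 2ℤθ + 2ℤθ² + ⋯ + 2ℤθ^{n-1}`. -/
noncomputable def suborderR {K : Type*} [Field K] (θ : K) (n : ℕ) : Submodule ℤ K :=
  Submodule.span ℤ (Set.range fun i : Fin n =>
    (if (i : ℕ) = 0 then 1 else 2) * θ ^ (i : ℕ))


/-! With `ℤ[θ] = ℤ + ℤθ + ⋯ + ℤθ^{n-1}` one has `I = ℤ + ℤθ + 2ℤ[θ]` and `R = ℤ + 2ℤ[θ]`.
Since `I ⊆ ℤ[θ]`, we get `2ℤ[θ] · I ⊆ 2ℤ[θ] ⊆ I`, hence `R ⊆ (I : I)`. Conversely, if `x I ⊆ I`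
then `x = x · 1 = a + bθ + 2y` with `y ∈ ℤ[θ]`, and `xθ ∈ I` forces `bθ² ∈ I`. As `n > 2`, `θ²`
is a basis vector whose coefficient in `I` is even, so `b` is even and `x ∈ R`. -/

open Polynomial Submodule

section Polynomial

variable {R S : Type*} [CommRing R] [Nontrivial R] [Ring S] [Algebra R S]

theorem aeval_mem_span_pow_of_monic {p : R[X]} (hp : p.Monic) {x : S} (hx : aeval x p = 0)
    (f : R[X]) : aeval x f ∈ span R (Set.range fun i : Fin p.natDegree => x ^ (i : ℕ)) := by
  rw [← aeval_modByMonic_eq_self_of_root hx]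
  exact PowerBasis.mem_span_pow'.2
    ⟨_, (degree_modByMonic_lt f hp).trans_eq (degree_eq_natDegree hp.ne_zero), rfl⟩

theorem adjoin_singleton_le_span_pow_of_monic {p : R[X]} (hp : p.Monic) {x : S}
    (hx : aeval x p = 0) :
    Subalgebra.toSubmodule (Algebra.adjoin R {x}) ≤
      span R (Set.range fun i : Fin p.natDegree => x ^ (i : ℕ)) := by
  rintro _ hy
  obtain ⟨f, rfl⟩ := (Algebra.adjoin_singleton_eq_range_aeval R x ▸ hy :)
  exact aeval_mem_span_pow_of_monic hp hx f

end Polynomial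

theorem dvd_of_smul_mem_span_smul {R M ι : Type*} [CommRing R] [AddCommGroup M] [Module R M]
    [Fintype ι] [DecidableEq ι] {v : ι → M} (hv : LinearIndependent R v) (w : ι → R) {i : ι}
    {a : R} (h : a • v i ∈ span R (Set.range fun j => w j • v j)) : w i ∣ a := by
  obtain ⟨c, hc⟩ := (mem_span_range_iff_exists_fun R).1 h
  have key : ∑ j, (c j * w j) • v j = ∑ j, (Pi.single i a : ι → R) j • v j := by
    simpa [mul_smul, Pi.single_apply] using hc
  exact ⟨c i, by simpa [mul_comm] using (Fintype.linearIndependent_iffₛ.1 hv _ _ key i).symm⟩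

section NumberField

variable {K : Type*} [Field K]

theorem natDegree_minpoly_int_eq_rat [CharZero K] {θ : K} (hθ : IsIntegral ℤ θ) :
    (minpoly ℤ θ).natDegree = (minpoly ℚ θ).natDegree := by
  rw [minpoly.isIntegrallyClosed_eq_field_fractions' ℚ hθ, (minpoly.monic hθ).natDegree_map]

theorem linearIndependent_pow_int [CharZero K] (θ : K) :
    LinearIndependent ℤ fun i : Fin (minpoly ℚ θ).natDegree => θ ^ (i : ℕ) :=
  (linearIndependent_pow θ).restrict_scalars' ℤ

end NumberField

theorem one_mem_colonSub {K : Type*} [Field K] (J : Submodule ℤ K) : (1 : K) ∈ colonSub J J :=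
  fun y hy => by simpa using hy

section MixedSpan

variable {K : Type*} [Field K] (θ : K) {n k : ℕ}

theorem suborderR_eq_mixedSpan_zero : suborderR θ n = mixedSpan θ n 0 := by
  simp only [suborderR, mixedSpan, Nat.le_zero]

theorem mixedSpan_eq_span_zsmul :
    mixedSpan θ n k = span ℤ (Set.range fun i : Fin n =>
      (if (i : ℕ) ≤ k then 1 else 2 : ℤ) • θ ^ (i : ℕ)) := by
  simp only [mixedSpan, zsmul_eq_mul]
  congr! 4
  split_ifs <;> simp

theorem ite_mul_pow_mem_mixedSpan (i : Fin n) :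
    (if (i : ℕ) ≤ k then 1 else 2) * θ ^ (i : ℕ) ∈ mixedSpan θ n k :=
  subset_span ⟨i, rfl⟩

theorem pow_mem_mixedSpan {i : ℕ} (hin : i < n) (hik : i ≤ k) : θ ^ i ∈ mixedSpan θ n k := by
  simpa [hik] using ite_mul_pow_mem_mixedSpan θ (k := k) ⟨i, hin⟩

theorem two_mul_pow_mem_mixedSpan {i : ℕ} (hin : i < n) : 2 * θ ^ i ∈ mixedSpan θ n k := by
  by_cases hik : i ≤ k
  · simpa using (mixedSpan θ n k).smul_mem (2 : ℤ) (pow_mem_mixedSpan θ hin hik)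
  · simpa [hik] using ite_mul_pow_mem_mixedSpan θ (k := k) ⟨i, hin⟩

theorem mixedSpan_le_adjoin : mixedSpan θ n k ≤ Subalgebra.toSubmodule (Algebra.adjoin ℤ {θ}) := by
  refine span_le.2 ?_
  rintro _ ⟨i, rfl⟩
  have hθ : θ ∈ Algebra.adjoin ℤ {θ} := Algebra.self_mem_adjoin_singleton ℤ θ
  dsimp only
  split_ifs
  · simpa using pow_mem hθ i
  · simpa using mul_mem (ofNat_mem _ 2) (pow_mem hθ i)

end MixedSpan

section PowerSpan

variable {K : Type*} [Field K] {θ : K} {n k : ℕ}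

theorem two_mul_mem_mixedSpan (hθ : Subalgebra.toSubmodule (Algebra.adjoin ℤ {θ}) ≤
    span ℤ (Set.range fun i : Fin n => θ ^ (i : ℕ))) {y : K} (hy : y ∈ Algebra.adjoin ℤ {θ}) :
    2 * y ∈ mixedSpan θ n k := by
  have hle : span ℤ (Set.range fun i : Fin n => θ ^ (i : ℕ)) ≤
      (mixedSpan θ n k).comap (LinearMap.mulLeft ℤ 2) :=
    span_le.2 fun _ ⟨i, hi⟩ => hi ▸ two_mul_pow_mem_mixedSpan θ i.2
  exact hle (hθ hy)

theorem intCast_add_two_mul_mem_mixedSpan (hθ : Subalgebra.toSubmodule (Algebra.adjoin ℤ {θ}) ≤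
    span ℤ (Set.range fun i : Fin n => θ ^ (i : ℕ))) (hn : 0 < n) (a : ℤ) {y : K}
    (hy : y ∈ Algebra.adjoin ℤ {θ}) : (a : K) + 2 * y ∈ mixedSpan θ n k := by
  refine add_mem ?_ (two_mul_mem_mixedSpan hθ hy)
  simpa using (mixedSpan θ n k).smul_mem a (pow_mem_mixedSpan θ hn k.zero_le)

theorem two_mul_mem_colonSub_mixedSpan (hθ : Subalgebra.toSubmodule (Algebra.adjoin ℤ {θ}) ≤
    span ℤ (Set.range fun i : Fin n => θ ^ (i : ℕ)))
    {y : K} (hy : y ∈ Algebra.adjoin ℤ {θ}) :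
    2 * y ∈ colonSub (mixedSpan θ n k) (mixedSpan θ n k) := fun z hz => by
  rw [mul_assoc]
  exact two_mul_mem_mixedSpan hθ (mul_mem hy (mixedSpan_le_adjoin θ hz))

theorem suborderR_le_colonSub_mixedSpan (hθ : Subalgebra.toSubmodule (Algebra.adjoin ℤ {θ}) ≤
    span ℤ (Set.range fun i : Fin n => θ ^ (i : ℕ))) :
    suborderR θ n ≤ colonSub (mixedSpan θ n k) (mixedSpan θ n k) := by
  refine span_le.2 ?_
  rintro _ ⟨i, rfl⟩
  dsimp only
  split_ifs with hi
  · simpa [hi] using one_mem_colonSub (mixedSpan θ n k)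
  · exact two_mul_mem_colonSub_mixedSpan hθ (pow_mem (Algebra.self_mem_adjoin_singleton ℤ θ) _)

theorem exists_eq_of_mem_mixedSpan_one {x : K}
    (hx : x ∈ mixedSpan θ n 1) :
    ∃ a b : ℤ, ∃ y ∈ Algebra.adjoin ℤ {θ}, x = a + b * θ + 2 * y := by
  have hθ : θ ∈ Algebra.adjoin ℤ {θ} := Algebra.self_mem_adjoin_singleton ℤ θ
  induction hx using span_induction with
  | mem _ hx =>
    obtain ⟨i, rfl⟩ := hx
    dsimp only
    split_ifs with hi
    · obtain h | h : (i : ℕ) = 0 ∨ (i : ℕ) = 1 := by omega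
      · exact ⟨1, 0, 0, zero_mem _, by simp [h]⟩
      · exact ⟨0, 1, 0, zero_mem _, by simp [h]⟩
    · exact ⟨0, 0, θ ^ (i : ℕ), pow_mem hθ _, by simp⟩
  | zero => exact ⟨0, 0, 0, zero_mem _, by simp⟩
  | add _ _ _ _ ihx ihy =>
    obtain ⟨a, b, y, hy, rfl⟩ := ihx
    obtain ⟨a', b', y', hy', rfl⟩ := ihy
    exact ⟨a + a', b + b', y + y', add_mem hy hy', by push_cast; ring⟩
  | smul c _ _ ih =>
    obtain ⟨a, b, y, hy, rfl⟩ := ih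
    refine ⟨c * a, c * b, c * y, mul_mem (intCast_mem _ c) hy, ?_⟩
    rw [zsmul_eq_mul]; push_cast; ring

theorem colonSub_mixedSpan_one_le_suborderR (hn : 2 < n)
    (hθ : Subalgebra.toSubmodule (Algebra.adjoin ℤ {θ}) ≤
      span ℤ (Set.range fun i : Fin n => θ ^ (i : ℕ)))
    (hli : LinearIndependent ℤ fun i : Fin n => θ ^ (i : ℕ)) :
    colonSub (mixedSpan θ n 1) (mixedSpan θ n 1) ≤ suborderR θ n := by
  intro x hx
  have hθA : θ ∈ Algebra.adjoin ℤ {θ} := Algebra.self_mem_adjoin_singleton ℤ θ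
  have hθI : θ ∈ mixedSpan θ n 1 := by simpa using pow_mem_mixedSpan θ (i := 1) (by omega) le_rfl
  obtain ⟨a, b, y, hy, rfl⟩ := exists_eq_of_mem_mixedSpan_one (by
    simpa using hx 1 (by simpa using pow_mem_mixedSpan θ (i := 0) (by omega) zero_le_one))
  -- Multiplying by `θ` moves the coefficient `b` onto `θ ^ 2`, where `I` only has even ones.
  have hb : b • θ ^ 2 ∈ mixedSpan θ n 1 := by
    have e : b • θ ^ 2 = (a + b * θ + 2 * y) * θ - a • θ - 2 * (y * θ) := by
      rw [zsmul_eq_mul, zsmul_eq_mul]; ring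
    rw [e]
    exact sub_mem (sub_mem (hx θ hθI) (zsmul_mem hθI a))
      (two_mul_mem_mixedSpan hθ (mul_mem hy hθA))
  obtain ⟨c, rfl⟩ : 2 ∣ b := by
    rw [mixedSpan_eq_span_zsmul] at hb
    simpa using dvd_of_smul_mem_span_smul hli _ (i := ⟨2, hn⟩) hb
  rw [suborderR_eq_mixedSpan_zero]
  convert intCast_add_two_mul_mem_mixedSpan hθ (k := 0) (by omega) a
    (add_mem (mul_mem (intCast_mem _ c) hθA) hy) using 1
  push_cast; ring

end PowerSpan

/-- Let `θ` be an algebraic integer of degree `n > 2`,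
`I = ℤ + ℤθ + 2ℤθ² + ⋯ + 2ℤθ^{n-1}` and `R = ℤ + 2ℤθ + ⋯ + 2ℤθ^{n-1}`.
Then `R = (I : I)` is the coefficient ring of `I`. -/
theorem stmt1 {K : Type*} [Field K] [CharZero K] {n : ℕ} (hn : 2 < n)
    (θ : K) (hint : IsIntegral ℤ θ) (hdeg : (minpoly ℚ θ).natDegree = n) :
    suborderR θ n = colonSub (mixedSpan θ n 1) (mixedSpan θ n 1) := by
  have hspan : Subalgebra.toSubmodule (Algebra.adjoin ℤ {θ}) ≤
      span ℤ (Set.range fun i : Fin n => θ ^ (i : ℕ)) := by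
    have h := adjoin_singleton_le_span_pow_of_monic (minpoly.monic hint) (minpoly.aeval ℤ θ)
    rwa [natDegree_minpoly_int_eq_rat hint, hdeg] at h
  have hli : LinearIndependent ℤ fun i : Fin n => θ ^ (i : ℕ) := hdeg ▸ linearIndependent_pow_int θ
  exact le_antisymm (suborderR_le_colonSub_mixedSpan hspan)
    (colonSub_mixedSpan_one_le_suborderR hn hspan hli)
end

section
/- Let A, B in GL_n(Z) have the same irreducible characteristic polynomial f(t), with right eigenvectors u of A and v of B for a common root β of f in K = Q[t]/(f). Then the map φ : Λ(A,B) → (J:I) sending X to the θ in K with Xv = θu is an isomorphism of abelian groups, where I and J are the fractional ideals generated over Z by the entries of u and v respectively, and Λ(A,B) = {X ∈ M_n(Z) : AX = XB}. -/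
/-- The intertwiner module `Λ(A,B) = {X ∈ M_n(ℤ) : AX = XB}`. -/
def Lambda {n : ℕ} (A B : Matrix (Fin n) (Fin n) ℤ) :
    Submodule ℤ (Matrix (Fin n) (Fin n) ℤ) where
  carrier := {X | A * X = X * B}
  add_mem' := by
    intro X Y hX hY
    simp only [Set.mem_setOf_eq] at *
    rw [mul_add, add_mul, hX, hY]
  zero_mem' := by simp
  smul_mem' := by
    intro c X hX
    simp only [Set.mem_setOf_eq] at *
    rw [mul_smul_comm, smul_mul_assoc, hX]


/-! The `ℚ`-span of the entries of a nonzero `β`-eigenvector `u` of `A` is stable under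
multiplication by `β`, so it contains the `n` independent elements `β ^ k * u i`; hence the `n`
entries of `u` are `ℚ`-linearly independent. In particular no nonzero eigenvector has a zero entry,
which forces the `β`-eigenspace of `A` over `K` to be the line `K u`.

For `X ∈ Λ(A,B)` the vector `X v` is a `β`-eigenvector of `A`, so `X v = θ u`, and
`θ u i = (X v) i ∈ J` says `θ ∈ (J : I)`. Conversely, as the entries of `v` are `ℤ`-independent,
`X ↦ X v` is injective and every `θ ∈ (J : I)` is realised by an integer matrix `X` with
`X v = θ u`, which then intertwines `A` and `B`. -/

open Polynomial Matrix Submodule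

section Eigenvector

variable {R F K : Type*} [CommRing R] [Field F] [Field K] [Algebra R F] [Algebra R K]
  [Algebra F K] [IsScalarTower R F K] {n : ℕ} {A : Matrix (Fin n) (Fin n) R} {β : K}
  {u : Fin n → K}

variable (F) in
theorem mul_mem_span_range_of_mulVec_eq_smul (hu : A.map (algebraMap R K) *ᵥ u = β • u)
    {x : K} (hx : x ∈ span F (Set.range u)) : β * x ∈ span F (Set.range u) := by
  induction hx using Submodule.span_induction with
  | mem _ hy =>
    obtain ⟨i, rfl⟩ := hy
    have hi : β * u i = ∑ j, A i j • u j := by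
      simpa [mulVec, dotProduct, Algebra.smul_def] using (congrFun hu i).symm
    rw [hi]
    exact sum_mem fun j _ => smul_of_tower_mem _ _ (subset_span (Set.mem_range_self j))
  | zero => simp
  | add _ _ _ _ hx hy => rw [mul_add]; exact add_mem hx hy
  | smul c _ _ hx => rw [mul_smul_comm]; exact smul_mem _ c hx

theorem linearIndependent_of_mulVec_eq_smul
    (hirr : Irreducible (A.charpoly.map (algebraMap R F))) (hβ : aeval β A.charpoly = 0)
    (hu0 : u ≠ 0) (hu : A.map (algebraMap R K) *ᵥ u = β • u) : LinearIndependent F u := by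
  obtain ⟨i, hi⟩ : ∃ i, u i ≠ 0 := Function.ne_iff.mp hu0
  have hmin : minpoly F β = A.charpoly.map (algebraMap R F) :=
    (minpoly.eq_of_irreducible_of_monic hirr (by rwa [aeval_map_algebraMap])
      (A.charpoly_monic.map _)).symm
  have hdeg : (minpoly F β).natDegree = n := by
    rw [hmin, ← charpoly_map, charpoly_natDegree_eq_dim, Fintype.card_fin]
  have hpow (k : ℕ) : β ^ k * u i ∈ span F (Set.range u) := by
    induction k with
    | zero => simpa using subset_span (Set.mem_range_self i)
    | succ k ih => rw [pow_succ', mul_assoc]; exact mul_mem_span_range_of_mulVec_eq_smul F hu ih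
  have hli : LinearIndependent F fun k : Fin (minpoly F β).natDegree => β ^ (k : ℕ) * u i :=
    (linearIndependent_pow β).map' (LinearMap.mulRight F (u i))
      (LinearMap.ker_eq_bot.mpr (mul_left_injective₀ hi))
  rw [linearIndependent_iff_card_le_finrank_span, Fintype.card_fin]
  calc n = (Set.range fun k : Fin (minpoly F β).natDegree => β ^ (k : ℕ) * u i).finrank F := by
        rw [Set.finrank, finrank_span_eq_card hli, Fintype.card_fin, hdeg]
    _ ≤ (Set.range u).finrank F := by
        have := FiniteDimensional.span_of_finite F (Set.finite_range u)
        exact Submodule.finrank_mono (span_le.mpr (Set.range_subset_iff.mpr fun k => hpow k))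

theorem mulVec_eq_smul_iff_exists_eq_smul
    (hirr : Irreducible (A.charpoly.map (algebraMap R F))) (hβ : aeval β A.charpoly = 0)
    (hu0 : u ≠ 0) (hu : A.map (algebraMap R K) *ᵥ u = β • u) {w : Fin n → K} :
    A.map (algebraMap R K) *ᵥ w = β • w ↔ ∃ θ : K, w = θ • u := by
  refine ⟨fun hw => ?_, fun ⟨θ, hθ⟩ => by rw [hθ, mulVec_smul, hu, smul_comm]⟩
  obtain ⟨i, hi⟩ : ∃ i, u i ≠ 0 := Function.ne_iff.mp hu0
  refine ⟨w i / u i, by_contra fun hne => ?_⟩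
  -- otherwise `w - (w i / u i) • u` is a nonzero eigenvector with a zero entry
  refine (linearIndependent_of_mulVec_eq_smul hirr hβ (sub_ne_zero.mpr hne) ?_).ne_zero i ?_
  · rw [mulVec_sub, mulVec_smul, hw, hu, smul_sub, smul_comm]
  · simp [div_mul_cancel₀ _ hi]

end Eigenvector

section MulVecMap

variable {R K : Type*} [CommRing R] [CommRing K] [Algebra R K] {m ι : Type*} [Fintype ι]

theorem Matrix.mulVec_map_algebraMap_apply (M : Matrix m ι R) (v : ι → K) (i : m) :
    (M.map (algebraMap R K) *ᵥ v) i = ∑ j, M i j • v j := by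
  simp [mulVec, dotProduct, Algebra.smul_def]

theorem Matrix.mulVec_map_algebraMap_injective {v : ι → K} (hv : LinearIndependent R v) :
    Function.Injective fun M : Matrix m ι R => M.map (algebraMap R K) *ᵥ v := by
  intro M N h
  ext i j
  have hi : ∑ j, (M i j - N i j) • v j = 0 := by
    simpa [sub_smul, ← mulVec_map_algebraMap_apply] using sub_eq_zero.mpr (congrFun h i)
  exact sub_eq_zero.mp (Fintype.linearIndependent_iff.mp hv _ hi j)

theorem Matrix.mulVec_map_algebraMap_apply_mem_span (M : Matrix m ι R) (v : ι → K) (i : m) :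
    (M.map (algebraMap R K) *ᵥ v) i ∈ span R (Set.range v) := by
  rw [mulVec_map_algebraMap_apply]
  exact sum_mem fun j _ => smul_mem _ _ (subset_span (Set.mem_range_self j))

theorem Matrix.exists_mulVec_map_algebraMap_eq {v : ι → K} {w : m → K}
    (hw : ∀ i, w i ∈ span R (Set.range v)) :
    ∃ M : Matrix m ι R, M.map (algebraMap R K) *ᵥ v = w := by
  choose c hc using fun i => (mem_span_range_iff_exists_fun R).mp (hw i)
  exact ⟨Matrix.of c, funext fun i => by rw [mulVec_map_algebraMap_apply, ← hc i]; rfl⟩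

end MulVecMap

theorem mem_colonSub_span_range_iff {K : Type*} [Field K] {J : Submodule ℤ K} {ι : Type*}
    {u : ι → K} {θ : K} : θ ∈ colonSub J (span ℤ (Set.range u)) ↔ ∀ i, θ * u i ∈ J := by
  refine ⟨fun h i => h _ (subset_span (Set.mem_range_self i)), fun h y hy => ?_⟩
  induction hy using Submodule.span_induction with
  | mem _ hy => obtain ⟨i, rfl⟩ := hy; exact h i
  | zero => simp
  | add _ _ _ _ hx hy => rw [mul_add]; exact add_mem hx hy
  | smul c _ _ hx => rw [mul_smul_comm]; exact smul_mem _ c hx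

section Intertwiner

variable {K : Type*} [Field K] {n : ℕ} {A B : Matrix (Fin n) (Fin n) ℤ} {β : K}
  {u v : Fin n → K}

theorem mem_Lambda_iff (hv : LinearIndependent ℤ v) (hBv : B.map (algebraMap ℤ K) *ᵥ v = β • v)
    {X : Matrix (Fin n) (Fin n) ℤ} :
    X ∈ Lambda A B ↔ A.map (algebraMap ℤ K) *ᵥ (X.map (algebraMap ℤ K) *ᵥ v) =
      β • (X.map (algebraMap ℤ K) *ᵥ v) := by
  change A * X = X * B ↔ _
  rw [← (mulVec_map_algebraMap_injective hv).eq_iff]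
  simp only [Matrix.map_mul, ← mulVec_mulVec, hBv, mulVec_smul]

theorem exists_addEquiv_Lambda_colonSub (hu0 : u ≠ 0) (hv : LinearIndependent ℤ v)
    (hBv : B.map (algebraMap ℤ K) *ᵥ v = β • v)
    (heig : ∀ w, A.map (algebraMap ℤ K) *ᵥ w = β • w ↔ ∃ θ : K, w = θ • u) :
    ∃ e : Lambda A B ≃+ colonSub (span ℤ (Set.range v)) (span ℤ (Set.range u)),
      ∀ X : Lambda A B,
        (X : Matrix (Fin n) (Fin n) ℤ).map (algebraMap ℤ K) *ᵥ v = (e X : K) • u := by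
  obtain ⟨i, hi⟩ : ∃ i, u i ≠ 0 := Function.ne_iff.mp hu0
  have coeff_eq : ∀ {w : Fin n → K} {θ : K}, w = θ • u → θ = w i / u i := by
    rintro _ θ rfl
    simp [hi]
  let Φ (X : Matrix (Fin n) (Fin n) ℤ) : Fin n → K := X.map (algebraMap ℤ K) *ᵥ v
  have hΦ (X : Lambda A B) : Φ X = (Φ X i / u i) • u := by
    obtain ⟨θ, hθ⟩ := (heig _).mp ((mem_Lambda_iff hv hBv).mp X.2)
    rwa [← coeff_eq hθ]
  have hmem (X : Lambda A B) :
      Φ X i / u i ∈ colonSub (span ℤ (Set.range v)) (span ℤ (Set.range u)) :=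
    mem_colonSub_span_range_iff.mpr fun j => by
      rw [← smul_eq_mul, ← Pi.smul_apply, ← hΦ X]
      exact mulVec_map_algebraMap_apply_mem_span _ v j
  let φ : Lambda A B →+ colonSub (span ℤ (Set.range v)) (span ℤ (Set.range u)) :=
    { toFun X := ⟨Φ X i / u i, hmem X⟩
      map_zero' := by ext; simp [Φ]
      map_add' X Y := by ext; simp [Φ, Matrix.map_add, add_mulVec, add_div] }
  refine ⟨AddEquiv.ofBijective φ ⟨(injective_iff_map_eq_zero φ).mpr fun X hX => ?_, ?_⟩, hΦ⟩
  · have hX0 : Φ X = Φ 0 := by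
      rw [hΦ X, show Φ X i / u i = 0 from congrArg Subtype.val hX]
      simp [Φ]
    exact Subtype.ext (mulVec_map_algebraMap_injective hv hX0)
  · rintro ⟨θ, hθ⟩
    obtain ⟨M, hM⟩ := exists_mulVec_map_algebraMap_eq (w := θ • u)
      (mem_colonSub_span_range_iff.mp hθ)
    have hMΛ : M ∈ Lambda A B := (mem_Lambda_iff hv hBv).mpr ((heig _).mpr ⟨θ, hM⟩)
    exact ⟨⟨M, hMΛ⟩, Subtype.ext (coeff_eq hM).symm⟩

end Intertwiner

theorem stmt8_general {K : Type*} [Field K] [CharZero K] {n : ℕ}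
    (A B : Matrix (Fin n) (Fin n) ℤ)
    (hirr : Irreducible (Polynomial.map (Int.castRingHom ℚ) A.charpoly))
    (hcp : B.charpoly = A.charpoly)
    (β : K) (hβ : Polynomial.aeval β A.charpoly = 0)
    (u v : Fin n → K) (hu0 : u ≠ 0) (hv0 : v ≠ 0)
    (hu : Matrix.mulVec (A.map (algebraMap ℤ K)) u = β • u)
    (hv : Matrix.mulVec (B.map (algebraMap ℤ K)) v = β • v) :
    ∃ e : Lambda A B ≃+
        colonSub (Submodule.span ℤ (Set.range v)) (Submodule.span ℤ (Set.range u)),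
      ∀ X : Lambda A B,
        Matrix.mulVec ((X : Matrix (Fin n) (Fin n) ℤ).map (algebraMap ℤ K)) v
          = (e X : K) • u := by
  have hv_indep : LinearIndependent ℚ v :=
    linearIndependent_of_mulVec_eq_smul (A := B) (by rwa [hcp]) (by rwa [hcp]) hv0 hv
  exact exists_addEquiv_Lambda_colonSub hu0 (hv_indep.restrict_scalars' ℤ) hv
    fun _ => mulVec_eq_smul_iff_exists_eq_smul (F := ℚ) hirr hβ hu0 hu

/-- Let `A, B ∈ GL_n(ℤ)` have the same irreducible characteristic polynomial `f`, with
right eigenvectors `u` of `A` and `v` of `B` for a common root `β` of `f` in `K`.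
Then the map `φ : Λ(A,B) → (J : I)` sending `X` to the `θ ∈ K` with `X v = θ u` is an
isomorphism of abelian groups, where `I` and `J` are the fractional ideals generated over
`ℤ` by the entries of `u` and `v` respectively. -/
theorem stmt8 {K : Type*} [Field K] [CharZero K] {n : ℕ} (hn : 0 < n)
    (A B : Matrix (Fin n) (Fin n) ℤ) (hA : IsUnit A.det) (hB : IsUnit B.det)
    (hirr : Irreducible (Polynomial.map (Int.castRingHom ℚ) A.charpoly))
    (hcp : B.charpoly = A.charpoly)
    (β : K) (hβ : Polynomial.aeval β A.charpoly = 0)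
    (u v : Fin n → K) (hu0 : u ≠ 0) (hv0 : v ≠ 0)
    (hu : Matrix.mulVec (A.map (algebraMap ℤ K)) u = β • u)
    (hv : Matrix.mulVec (B.map (algebraMap ℤ K)) v = β • v) :
    ∃ e : Lambda A B ≃+
        colonSub (Submodule.span ℤ (Set.range v)) (Submodule.span ℤ (Set.range u)),
      ∀ X : Lambda A B,
        Matrix.mulVec ((X : Matrix (Fin n) (Fin n) ℤ).map (algebraMap ℤ K)) v
          = (e X : K) • u :=
  stmt8_general A B hirr hcp β hβ u v hu0 hv0 hu hv
end

section
/- Suppose M ∈ GL_{nk}(Z) satisfies (⊕_{i=1}^k B)M = M(⊕_{i=1}^k A_i) where B, A_1, ..., A_k ∈ GL_n(Z) all have the same irreducible characteristic polynomial, A = A_1, I and J the ideals associated to A and B. Then (I:I) = (J:J). -/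
namespace Matrix

open Polynomial

theorem exists_eq_smul_of_mulVec_eq_smul_of_separable {ι K : Type*} [Fintype ι]
    [DecidableEq ι] [Field K] {C : Matrix ι ι K} (hC : C.charpoly.Separable) {β : K}
    {x y : ι → K} (hy0 : y ≠ 0) (hx : C *ᵥ x = β • x) (hy : C *ᵥ y = β • y) :
    ∃ c : K, x = c • y := by
  let E := Module.End.eigenspace (toLin' C) β
  have hxE : x ∈ E := Module.End.mem_eigenspace_iff.mpr hx
  have hyE : y ∈ E := Module.End.mem_eigenspace_iff.mpr hy
  have hyE0 : (⟨y, hyE⟩ : E) ≠ 0 := fun h => hy0 (congrArg Subtype.val h)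
  have hdim : Module.finrank K E = 1 := by
    refine le_antisymm ?_ (Nat.one_le_iff_ne_zero.mpr ?_)
    · calc Module.finrank K E ≤ (toLin' C).charpoly.rootMultiplicity β :=
            LinearMap.finrank_eigenspace_le _ _
        _ ≤ 1 := by
          rw [charpoly_toLin']
          exact rootMultiplicity_le_one_of_separable hC β
    · exact (Module.finrank_pos_iff_exists_ne_zero.mpr ⟨_, hyE0⟩).ne'
  obtain ⟨c, hc⟩ := (finrank_eq_one_iff_of_nonzero' _ hyE0).mp hdim ⟨x, hxE⟩
  exact ⟨c, (congrArg Subtype.val hc).symm⟩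

theorem mulVec_mulVec_eq_smul_of_mul_eq_mul {m n R : Type*} [Fintype m] [Fintype n]
    [CommSemiring R] {P : Matrix m m R} {Q : Matrix n n R} {X : Matrix m n R} {β : R}
    {x : n → R} (h : P * X = X * Q) (hx : Q *ᵥ x = β • x) :
    P *ᵥ (X *ᵥ x) = β • (X *ᵥ x) := by
  rw [mulVec_mulVec, h, ← mulVec_mulVec, hx, mulVec_smul]

section IntegerMatrix

variable {ι K : Type*} [Fintype ι] [DecidableEq ι] [Field K] [CharZero K]

theorem separable_charpoly_map_of_irreducible (C : Matrix ι ι ℤ)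
    (hirr : Irreducible (C.charpoly.map (Int.castRingHom ℚ))) :
    (C.map (algebraMap ℤ K)).charpoly.Separable := by
  have h : C.charpoly.map (algebraMap ℤ K) =
      (C.charpoly.map (Int.castRingHom ℚ)).map (algebraMap ℚ K) := by
    rw [Polynomial.map_map]
    congr 1
    exact RingHom.ext_int _ _
  rw [charpoly_map, h]
  exact hirr.separable.map

theorem exists_map_mulVec_eq_smul_of_mul_eq_mul {P Q X : Matrix ι ι ℤ}
    (hP : Irreducible (P.charpoly.map (Int.castRingHom ℚ))) (h : P * X = X * Q) {β : K}
    {x y : ι → K} (hx : Q.map (algebraMap ℤ K) *ᵥ x = β • x) (hy0 : y ≠ 0)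
    (hy : P.map (algebraMap ℤ K) *ᵥ y = β • y) :
    ∃ c : K, X.map (algebraMap ℤ K) *ᵥ x = c • y := by
  refine exists_eq_smul_of_mulVec_eq_smul_of_separable
    (separable_charpoly_map_of_irreducible P hP) hy0 ?_ hy
  refine mulVec_mulVec_eq_smul_of_mul_eq_mul ?_ hx
  rw [← Matrix.map_mul, ← Matrix.map_mul, h]

end IntegerMatrix

section Blocks

variable {l m p o α : Type*} [Fintype m] [Fintype o] [NonUnitalNonAssocSemiring α]

theorem submatrix_blockDiagonal_mul [DecidableEq o] (D : o → Matrix l m α)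
    (X : Matrix (m × o) (p × o) α) (i j : o) :
    (blockDiagonal D * X).submatrix (·, i) (·, j) = D i * X.submatrix (·, i) (·, j) := by
  ext a b
  simp [mul_apply, Fintype.sum_prod_type, blockDiagonal_apply]

theorem submatrix_mul_blockDiagonal [DecidableEq o] (X : Matrix (l × o) (m × o) α)
    (D : o → Matrix m p α) (i j : o) :
    (X * blockDiagonal D).submatrix (·, i) (·, j) = X.submatrix (·, i) (·, j) * D j := by
  ext a b
  simp [mul_apply, Fintype.sum_prod_type, blockDiagonal_apply]

theorem submatrix_mul_eq_sum (X : Matrix (l × o) (m × o) α) (Y : Matrix (m × o) (p × o) α)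
    (i j : o) :
    (X * Y).submatrix (·, i) (·, j) =
      ∑ r, X.submatrix (·, i) (·, r) * Y.submatrix (·, r) (·, j) := by
  ext a b
  simp [mul_apply, Fintype.sum_prod_type, Matrix.sum_apply, Finset.sum_comm (γ := o)]

end Blocks

theorem mul_nonsing_inv_eq_nonsing_inv_mul_of_mul_eq_mul {m R : Type*} [Fintype m]
    [DecidableEq m] [CommRing R] {P Q M : Matrix m m R} (hM : IsUnit M.det)
    (h : P * M = M * Q) : Q * M⁻¹ = M⁻¹ * P :=
  calc Q * M⁻¹ = M⁻¹ * (M * Q) * M⁻¹ := by rw [← Matrix.mul_assoc, nonsing_inv_mul _ hM, one_mul]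
    _ = M⁻¹ * P := by rw [← h, Matrix.mul_assoc, Matrix.mul_assoc, mul_nonsing_inv _ hM, mul_one]

theorem sum_mul_eq_one_of_mulVec_eq_smul {m o K : Type*} [Fintype m] [Fintype o]
    [DecidableEq m] [Field K] {X Y : o → Matrix m m K} (hYX : ∑ j, Y j * X j = 1)
    {u v : m → K} (hu : u ≠ 0) {c d : o → K} (hX : ∀ j, X j *ᵥ u = c j • v)
    (hY : ∀ j, Y j *ᵥ v = d j • u) :
    ∑ j, c j * d j = 1 := by
  refine smul_left_injective K hu (?_ : (∑ j, c j * d j) • u = (1 : K) • u)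
  calc (∑ j, c j * d j) • u = ∑ j, Y j *ᵥ (X j *ᵥ u) := by
        simp only [hX, hY, mulVec_smul, Finset.sum_smul, mul_smul]
    _ = u := by simp only [mulVec_mulVec, ← sum_mulVec, hYX, one_mulVec]
    _ = (1 : K) • u := (one_smul K u).symm

theorem map_mulVec_mem_span {m n R A : Type*} [Fintype n] [CommSemiring R] [Semiring A]
    [Algebra R A] (X : Matrix m n R) (x : n → A) (i : m) :
    (X.map (algebraMap R A) *ᵥ x) i ∈ Submodule.span R (Set.range x) := by
  simp only [mulVec, dotProduct, map_apply, ← Algebra.smul_def]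
  exact Submodule.sum_mem _ fun j _ => Submodule.smul_mem _ _ (Submodule.subset_span ⟨j, rfl⟩)

theorem mul_mem_span_of_map_mulVec_eq_smul {m n R A : Type*} [Fintype n] [CommSemiring R]
    [Semiring A] [Algebra R A] {X : Matrix m n R} {x : n → A} {y : m → A} {c : A}
    (h : X.map (algebraMap R A) *ᵥ x = c • y) :
    ∀ t ∈ Submodule.span R (Set.range y), c * t ∈ Submodule.span R (Set.range x) := by
  refine fun t ht => Submodule.span_le (p := (Submodule.span R _).comap (LinearMap.mulLeft R c))
    |>.mpr ?_ ht
  rintro _ ⟨a, rfl⟩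
  have hmem := map_mulVec_mem_span X x a
  rw [h] at hmem
  exact hmem

end Matrix

theorem colonSub_le_of_sum_mul_eq_one {K ι : Type*} [Field K] [Fintype ι] {I J : Submodule ℤ K}
    {c d : ι → K} (hcd : ∑ i, c i * d i = 1) (hc : ∀ i, ∀ t ∈ J, c i * t ∈ I)
    (hd : ∀ i, ∀ t ∈ I, d i * t ∈ J) :
    colonSub I I ≤ colonSub J J := by
  intro x hx t ht
  have hsum : x * t = ∑ i, d i * (x * (c i * t)) :=
    calc x * t = (∑ i, c i * d i) * (x * t) := by rw [hcd, one_mul]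
      _ = ∑ i, d i * (x * (c i * t)) := by
        rw [Finset.sum_mul]
        exact Finset.sum_congr rfl fun i _ => by ring
  rw [hsum]
  exact Submodule.sum_mem _ fun i _ => hd i _ (hx _ (hc i t ht))

theorem stmt11_general {K : Type*} [Field K] [CharZero K] {n k : ℕ} (hk : 0 < k)
    (B : Matrix (Fin n) (Fin n) ℤ) (A : Fin k → Matrix (Fin n) (Fin n) ℤ)
    (hirr : Irreducible (Polynomial.map (Int.castRingHom ℚ) B.charpoly))
    (hcp : ∀ i, (A i).charpoly = B.charpoly)
    (β : K)
    (u v : Fin n → K) (hu0 : u ≠ 0) (hv0 : v ≠ 0)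
    (hu : Matrix.mulVec ((A ⟨0, hk⟩).map (algebraMap ℤ K)) u = β • u)
    (hv : Matrix.mulVec (B.map (algebraMap ℤ K)) v = β • v)
    (M : Matrix (Fin n × Fin k) (Fin n × Fin k) ℤ) (hM : IsUnit M.det)
    (hconj : Matrix.blockDiagonal (fun _ : Fin k => B) * M = M * Matrix.blockDiagonal A) :
    colonSub (Submodule.span ℤ (Set.range u)) (Submodule.span ℤ (Set.range u))
      = colonSub (Submodule.span ℤ (Set.range v)) (Submodule.span ℤ (Set.range v)) := by
  set i₀ : Fin k := ⟨0, hk⟩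
  have hconj' := Matrix.mul_nonsing_inv_eq_nonsing_inv_mul_of_mul_eq_mul hM hconj
  choose c hc using fun j => Matrix.exists_map_mulVec_eq_smul_of_mul_eq_mul hirr
    (by simpa only [Matrix.submatrix_blockDiagonal_mul, Matrix.submatrix_mul_blockDiagonal]
      using congrArg (·.submatrix (·, j) (·, i₀)) hconj) hu hv0 hv
  choose d hd using fun j => Matrix.exists_map_mulVec_eq_smul_of_mul_eq_mul (hcp i₀ ▸ hirr)
    (by simpa only [Matrix.submatrix_blockDiagonal_mul, Matrix.submatrix_mul_blockDiagonal]
      using congrArg (·.submatrix (·, i₀) (·, j)) hconj') hv hu0 hu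
  have hinv : ∑ j, (M⁻¹.submatrix (·, i₀) (·, j)).map (algebraMap ℤ K) *
      (M.submatrix (·, j) (·, i₀)).map (algebraMap ℤ K) = 1 := by
    have h := Matrix.submatrix_mul_eq_sum M⁻¹ M i₀ i₀
    rw [Matrix.nonsing_inv_mul _ hM, Matrix.submatrix_one _ (Prod.mk_left_injective i₀)] at h
    simpa only [map_sum, map_mul, map_one, RingHom.mapMatrix_apply]
      using congrArg (algebraMap ℤ K).mapMatrix h.symm
  have hcd := Matrix.sum_mul_eq_one_of_mulVec_eq_smul hinv hu0 hc hd
  have hcJ := fun j => Matrix.mul_mem_span_of_map_mulVec_eq_smul (hc j)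
  have hdI := fun j => Matrix.mul_mem_span_of_map_mulVec_eq_smul (hd j)
  exact le_antisymm (colonSub_le_of_sum_mul_eq_one hcd hcJ hdI)
    (colonSub_le_of_sum_mul_eq_one (by simpa only [mul_comm] using hcd) hdI hcJ)

/-- Suppose `M ∈ GL_{nk}(ℤ)` satisfies `(⊕ᵢ B) M = M (⊕ᵢ Aᵢ)`, where `B, A₁, …, A_k` all
lie in `GL_n(ℤ)` with the same irreducible characteristic polynomial and `A = A₁`.
Then the coefficient rings of the ideals `I` and `J` associated to `A` and `B` coincide:
`(I : I) = (J : J)`. -/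
theorem stmt11 {K : Type*} [Field K] [CharZero K] {n k : ℕ} (hn : 0 < n) (hk : 0 < k)
    (B : Matrix (Fin n) (Fin n) ℤ) (A : Fin k → Matrix (Fin n) (Fin n) ℤ)
    (hB : IsUnit B.det) (hA : ∀ i, IsUnit (A i).det)
    (hirr : Irreducible (Polynomial.map (Int.castRingHom ℚ) B.charpoly))
    (hcp : ∀ i, (A i).charpoly = B.charpoly)
    (β : K) (hβ : Polynomial.aeval β B.charpoly = 0)
    (u v : Fin n → K) (hu0 : u ≠ 0) (hv0 : v ≠ 0)
    (hu : Matrix.mulVec ((A ⟨0, hk⟩).map (algebraMap ℤ K)) u = β • u)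
    (hv : Matrix.mulVec (B.map (algebraMap ℤ K)) v = β • v)
    (M : Matrix (Fin n × Fin k) (Fin n × Fin k) ℤ) (hM : IsUnit M.det)
    (hconj : Matrix.blockDiagonal (fun _ : Fin k => B) * M = M * Matrix.blockDiagonal A) :
    colonSub (Submodule.span ℤ (Set.range u)) (Submodule.span ℤ (Set.range u))
      = colonSub (Submodule.span ℤ (Set.range v)) (Submodule.span ℤ (Set.range v)) :=
  stmt11_general hk B A hirr hcp β u v hu0 hv0 hu hv M hM hconj
end

section
/- If A and B in GL_n(Z) with the same irreducible characteristic polynomial are k-block conjugate for some k ≥ 1, then they are (k+1)-block conjugate. -/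
/-- Conjugacy of integer matrices by a matrix in `GL(ℤ)`. -/
def ConjZ {m : Type*} [Fintype m] [DecidableEq m] (X Y : Matrix m m ℤ) : Prop :=
  ∃ M : Matrix m m ℤ, IsUnit M.det ∧ X * M = M * Y

/-- `A` and `B` in `GL_n(ℤ)` are `k`-block conjugate if there exist
`A₂, …, A_k, B₂, …, B_k ∈ GL_n(ℤ)` such that `⊕ᵢ₌₁ᵏ A ≈ ⊕ᵢ₌₁ᵏ Bᵢ` (with `B₁ = B`) and
`⊕ᵢ₌₁ᵏ B ≈ ⊕ᵢ₌₁ᵏ Aᵢ` (with `A₁ = A`). -/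
def kBlockConj (n k : ℕ) (A B : Matrix (Fin n) (Fin n) ℤ) : Prop :=
  ∃ Ai Bi : Fin k → Matrix (Fin n) (Fin n) ℤ,
    (∀ i, IsUnit (Ai i).det) ∧ (∀ i, IsUnit (Bi i).det) ∧
    (∀ h : 0 < k, Ai ⟨0, h⟩ = A ∧ Bi ⟨0, h⟩ = B) ∧
    ConjZ (Matrix.blockDiagonal fun _ : Fin k => A) (Matrix.blockDiagonal Bi) ∧
    ConjZ (Matrix.blockDiagonal fun _ : Fin k => B) (Matrix.blockDiagonal Ai)

/-! Both conjugacies are extended by one more block: `⊕ A ⊕ A ≈ ⊕ Bᵢ ⊕ A` and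
`⊕ B ⊕ B ≈ ⊕ Aᵢ ⊕ B`, i.e. one takes `B_{k+1} = A` and `A_{k+1} = B`. -/

open Matrix

namespace ConjZ

variable {m l : Type*} [Fintype m] [DecidableEq m] [Fintype l] [DecidableEq l]

lemma submatrix_equiv {X Y : Matrix m m ℤ} (e : l ≃ m) (h : ConjZ X Y) :
    ConjZ (X.submatrix e e) (Y.submatrix e e) := by
  obtain ⟨M, hM, hXY⟩ := h
  refine ⟨M.submatrix e e, by rwa [det_submatrix_equiv_self], ?_⟩
  rw [submatrix_mul_equiv, submatrix_mul_equiv, hXY]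

lemma fromBlocks_zero {X Y : Matrix m m ℤ} {X' Y' : Matrix l l ℤ}
    (h : ConjZ X Y) (h' : ConjZ X' Y') :
    ConjZ (fromBlocks X 0 0 X') (fromBlocks Y 0 0 Y') := by
  obtain ⟨M, hM, hXY⟩ := h
  obtain ⟨M', hM', hXY'⟩ := h'
  refine ⟨fromBlocks M 0 0 M', ?_, ?_⟩
  · rw [det_fromBlocks_zero₂₁]
    exact hM.mul hM'
  · simp [fromBlocks_multiply, hXY, hXY']

lemma refl (X : Matrix m m ℤ) : ConjZ X X :=
  ⟨1, by simp, by simp⟩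

end ConjZ

def prodFinSuccEquiv (n k : ℕ) : Fin n × Fin (k + 1) ≃ (Fin n × Fin k) ⊕ Fin n :=
  ((Equiv.refl _).prodCongr finSumFinEquiv.symm).trans <|
    (Equiv.prodSumDistrib _ _ _).trans <| Equiv.sumCongr (Equiv.refl _) (Equiv.prodUnique _ _)

lemma Matrix.blockDiagonal_snoc {α : Type*} [Zero α] {n k : ℕ}
    (f : Fin k → Matrix (Fin n) (Fin n) α) (x : Matrix (Fin n) (Fin n) α) :
    blockDiagonal (Fin.snoc f x) =
      (fromBlocks (blockDiagonal f) 0 0 x).submatrix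
        (prodFinSuccEquiv n k) (prodFinSuccEquiv n k) := by
  ext ⟨a, i⟩ ⟨b, j⟩
  induction i using Fin.lastCases <;> induction j using Fin.lastCases <;>
    simp [prodFinSuccEquiv, blockDiagonal_apply, eq_comm (a := Fin.last k)]

lemma Fin.snoc_const {α : Type*} {k : ℕ} (a : α) :
    (Fin.snoc (fun _ : Fin k => a) a : Fin (k + 1) → α) = fun _ => a := by
  funext i
  induction i using Fin.lastCases <;> simp

lemma ConjZ.blockDiagonal_snoc {n k : ℕ} {f g : Fin k → Matrix (Fin n) (Fin n) ℤ}
    {x y : Matrix (Fin n) (Fin n) ℤ} (h : ConjZ (blockDiagonal f) (blockDiagonal g))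
    (h' : ConjZ x y) : ConjZ (blockDiagonal (Fin.snoc f x)) (blockDiagonal (Fin.snoc g y)) := by
  rw [Matrix.blockDiagonal_snoc, Matrix.blockDiagonal_snoc]
  exact (h.fromBlocks_zero h').submatrix_equiv _

theorem stmt14_general {n k : ℕ} (hk : 1 ≤ k)
    (A B : Matrix (Fin n) (Fin n) ℤ) (hA : IsUnit A.det) (hB : IsUnit B.det)
    (h : kBlockConj n k A B) : kBlockConj n (k + 1) A B := by
  obtain ⟨Ai, Bi, hAi, hBi, hfirst, hABi, hBAi⟩ := h
  refine ⟨Fin.snoc Ai B, Fin.snoc Bi A, ?_, ?_, fun _ => ?_, ?_, ?_⟩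
  · exact Fin.lastCases (by simpa using hB) (by simpa using hAi)
  · exact Fin.lastCases (by simpa using hA) (by simpa using hBi)
  · have hzero : (⟨0, _⟩ : Fin (k + 1)) = Fin.castSucc ⟨0, hk⟩ := rfl
    simpa only [hzero, Fin.snoc_castSucc] using hfirst hk
  · simpa only [Fin.snoc_const] using hABi.blockDiagonal_snoc (ConjZ.refl A)
  · simpa only [Fin.snoc_const] using hBAi.blockDiagonal_snoc (ConjZ.refl B)

/-- If `A` and `B` in `GL_n(ℤ)` with the same irreducible characteristic polynomial are
`k`-block conjugate for some `k ≥ 1`, then they are `(k+1)`-block conjugate. -/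
theorem stmt14 {n k : ℕ} (hn : 0 < n) (hk : 1 ≤ k)
    (A B : Matrix (Fin n) (Fin n) ℤ) (hA : IsUnit A.det) (hB : IsUnit B.det)
    (hirr : Irreducible (Polynomial.map (Int.castRingHom ℚ) A.charpoly))
    (hcp : B.charpoly = A.charpoly)
    (h : kBlockConj n k A B) : kBlockConj n (k + 1) A B :=
  stmt14_general hk A B hA hB h
end

section
/- There exists a semiconjugacy from A to ⊕_{i=1}^k B by a linear embedding ι: T^n → T^{nk} (i.e., ι∘A = (⊕_{i=1}^k B)∘ι with ι injective linear) if and only if there exists M ∈ GL_{nk}(Z) and matrices S ∈ M_{n×n(k-1)}(Z), A' ∈ GL_{n(k-1)}(Z) such that (⊕_{i=1}^k B) M = M [[A, S],[0, A']]. -/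
/-!
The defining property of a torus embedding `L` (a real `x` with `Lx` integral is integral),
applied to `x = v / d`, says that `L : ℤⁿ → ℤⁿᵏ` is injective with torsion-free cokernel. Over the
PID `ℤ` that cokernel is free, the inclusion splits, and a basis of the complement extends the
columns of `L` to a unimodular matrix `M`; conversely the first `n` columns of a unimodular matrix
form a torus embedding. In the basis given by the columns of `M`, the relation `D L = L A` with
`D = ⊕ᵢ₌₁ᵏ B` says exactly that `M⁻¹ D M` is block upper triangular with upper-left block `A`; its
lower-right block `A'` is unimodular because `det A · det A' = det D`.
-/

/-- An integer matrix `L` induces a linear embedding of tori (an injective linear map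
`T^n → T^{nk}`) precisely when the only real vectors `x` with `Lx` integral are themselves
integral. -/
def IsTorusEmbedding {ρ : Type*} [Fintype ρ] {n : ℕ} (L : Matrix ρ (Fin n) ℤ) : Prop :=
  ∀ x : Fin n → ℝ,
    (∀ j, ∃ m : ℤ, Matrix.mulVec (L.map (Int.cast : ℤ → ℝ)) x j = (m : ℝ)) →
    ∀ i, ∃ m : ℤ, x i = (m : ℝ)

open Matrix Module

namespace Matrix

variable {R l m m' κ : Type*}

theorem toCols₁_mul [Semiring R] [Fintype m'] (X : Matrix l m' R) (Y : Matrix m' (m ⊕ κ) R) :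
    (X * Y).toCols₁ = X * Y.toCols₁ := by
  ext i j
  simp [toCols₁, mul_apply]

theorem mul_fromRows_zero [Semiring R] [Fintype m] [Fintype κ] (M : Matrix l (m ⊕ κ) R)
    (A : Matrix m m' R) : M * fromRows A (0 : Matrix κ m' R) = M.toCols₁ * A := by
  conv_lhs => rw [← fromCols_toCols M]
  rw [fromCols_mul_fromRows, Matrix.mul_zero, add_zero]

theorem toCols₁_eq_fromRows_zero_iff [Zero R] {N : Matrix (m ⊕ κ) (m ⊕ κ) R}
    {A : Matrix m m R} : N.toCols₁ = fromRows A 0 ↔ ∃ S A', N = fromBlocks A S 0 A' := by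
  constructor
  · intro h
    refine ⟨N.toCols₂.toRows₁, N.toCols₂.toRows₂, ?_⟩
    rw [← fromCols_fromRows_eq_fromBlocks, fromRows_toRows, ← h, fromCols_toCols]
  · rintro ⟨S, A', rfl⟩
    ext (i | i) j <;> rfl

variable [CommRing R] [Fintype m] [Fintype κ] [DecidableEq m] [DecidableEq κ]

theorem mul_toCols₁_eq_iff {D M : Matrix (m ⊕ κ) (m ⊕ κ) R} (hM : IsUnit M.det)
    (A : Matrix m m R) :
    D * M.toCols₁ = M.toCols₁ * A ↔ ∃ S A', D * M = M * fromBlocks A S 0 A' := by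
  have := M.invertibleOfIsUnitDet hM
  simp_rw [← toCols₁_mul, ← mul_fromRows_zero, ← inv_mul_eq_iff_eq_mul_of_invertible,
    ← toCols₁_mul, toCols₁_eq_fromRows_zero_iff]

theorem isUnit_det_of_mul_eq_mul_fromBlocks {D M : Matrix (m ⊕ κ) (m ⊕ κ) R}
    {A : Matrix m m R} {S : Matrix m κ R} {A' : Matrix κ κ R}
    (hD : IsUnit D.det) (hM : IsUnit M.det) (h : D * M = M * fromBlocks A S 0 A') :
    IsUnit A'.det := by
  have hDM : IsUnit (M * fromBlocks A S 0 A').det := h ▸ (det_mul D M).symm ▸ hD.mul hM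
  rw [det_mul, det_fromBlocks_zero₂₁] at hDM
  exact isUnit_of_mul_isUnit_right (isUnit_of_mul_isUnit_right hDM)

theorem exists_isUnit_det_toCols₁_eq [IsDomain R] [IsPrincipalIdealRing R]
    (L : Matrix (m ⊕ κ) m R) (hinj : Function.Injective L.mulVecLin)
    [IsTorsionFree R ((m ⊕ κ → R) ⧸ LinearMap.range L.mulVecLin)] :
    ∃ M : Matrix (m ⊕ κ) (m ⊕ κ) R, IsUnit M.det ∧ M.toCols₁ = L := by
  -- The cokernel is finitely generated and torsion-free over a PID, hence free and projective.
  obtain ⟨s, hs⟩ := projective_lifting_property (LinearMap.range L.mulVecLin).mkQ LinearMap.id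
    (Submodule.mkQ_surjective _)
  obtain ⟨e, hLe, -⟩ := L.mulVecLin.exact_map_mkQ_range.splitSurjectiveEquiv hinj ⟨s, hs⟩
  have hrank : finrank R ((m ⊕ κ → R) ⧸ LinearMap.range L.mulVecLin) = finrank R (κ → R) := by
    have := e.finrank_eq
    simp only [finrank_prod, finrank_fintype_fun_eq_card, Fintype.card_sum] at this ⊢
    omega
  let E : (m ⊕ κ → R) ≃ₗ[R] (m ⊕ κ → R) :=
    (LinearEquiv.sumArrowLequivProdArrow m κ R R).trans
      (((LinearEquiv.refl R _).prodCongr (LinearEquiv.ofFinrankEq _ _ hrank).symm).trans e.symm)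
  refine ⟨LinearMap.toMatrix' E, ?_, ?_⟩
  · rw [LinearMap.det_toMatrix']
    exact LinearEquiv.isUnit_det' E
  · ext i j
    have hsingle : LinearEquiv.sumArrowLequivProdArrow m κ R R (Pi.single (Sum.inl j) 1) =
        (Pi.single j 1, 0) := by
      ext <;> simp [Pi.single_apply]
    have hcol := LinearMap.congr_fun hLe (Pi.single j 1)
    simp only [LinearMap.coe_comp, LinearEquiv.coe_coe, Function.comp_apply,
      LinearMap.inl_apply] at hcol
    simp [toCols₁, LinearMap.toMatrix'_apply, E, hsingle, ← hcol]

theorem map_intCast_mulVec {ρ ι : Type*} [Fintype ι] (L : Matrix ρ ι ℤ) (v : ι → ℤ) :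
    L.map (Int.cast : ℤ → ℝ) *ᵥ (fun i => (v i : ℝ)) = fun j => ((L *ᵥ v) j : ℝ) :=
  funext fun j => ((Int.castRingHom ℝ).map_mulVec L v j).symm

end Matrix

namespace IsTorusEmbedding

variable {ρ : Type*} [Fintype ρ] {n : ℕ} {L : Matrix ρ (Fin n) ℤ}

theorem exists_eq_smul_of_mulVec_eq_smul (hL : IsTorusEmbedding L) {d : ℤ} (hd : d ≠ 0)
    {v : Fin n → ℤ} {w : ρ → ℤ} (h : L *ᵥ v = d • w) : ∃ u, v = d • u := by
  have hd' : (d : ℝ) ≠ 0 := Int.cast_ne_zero.mpr hd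
  have hx : (fun i => (v i : ℝ) / d) = (d : ℝ)⁻¹ • fun i => (v i : ℝ) := by
    ext i
    simp [div_eq_inv_mul]
  have hint : ∀ i, ∃ u : ℤ, (v i : ℝ) / d = u := by
    refine hL _ fun j => ⟨w j, ?_⟩
    rw [hx, mulVec_smul, map_intCast_mulVec, h]
    simp [hd']
  choose u hu using hint
  refine ⟨u, funext fun i => ?_⟩
  have hui := hu i
  rw [div_eq_iff hd'] at hui
  exact_mod_cast hui.trans (mul_comm _ _)

theorem injective_mulVecLin (hL : IsTorusEmbedding L) : Function.Injective L.mulVecLin := by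
  refine (injective_iff_map_eq_zero _).2 fun v hv => funext fun i => ?_
  by_contra hvi
  obtain ⟨u, hu⟩ := hL.exists_eq_smul_of_mulVec_eq_smul (mul_ne_zero two_ne_zero hvi)
    (w := 0) (by simpa using hv)
  have hvu : v i * 1 = v i * (2 * u i) := by
    simpa [mul_comm, mul_left_comm] using congrFun hu i
  have h2u := mul_left_cancel₀ hvi hvu
  omega

theorem isTorsionFree (hL : IsTorusEmbedding L) :
    IsTorsionFree ℤ ((ρ → ℤ) ⧸ LinearMap.range L.mulVecLin) := by
  refine isTorsionFree_iff_smul_eq_zero.2 fun d q hdq => or_iff_not_imp_left.2 fun hd => ?_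
  obtain ⟨w, rfl⟩ := Submodule.mkQ_surjective _ q
  rw [← map_smul, Submodule.mkQ_apply, Submodule.Quotient.mk_eq_zero] at hdq
  obtain ⟨v, hv⟩ := hdq
  obtain ⟨u, rfl⟩ := hL.exists_eq_smul_of_mulVec_eq_smul hd hv
  rw [Submodule.mkQ_apply, Submodule.Quotient.mk_eq_zero]
  refine ⟨u, smul_right_injective _ hd ?_⟩
  rwa [map_smul] at hv

end IsTorusEmbedding

theorem isTorusEmbedding_toCols₁_of_isUnit_det {κ : Type*} [Fintype κ] [DecidableEq κ] {n : ℕ}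
    {M : Matrix (Fin n ⊕ κ) (Fin n ⊕ κ) ℤ} (hM : IsUnit M.det) : IsTorusEmbedding M.toCols₁ := by
  intro x hx i
  choose w hw using hx
  have hMx : M.map (Int.cast : ℤ → ℝ) *ᵥ Sum.elim x 0 = fun j => (w j : ℝ) := by
    ext j
    rw [← hw j]
    simp [mulVec, dotProduct, Fintype.sum_sum_type, toCols₁]
  have hinv : M⁻¹.map (Int.cast : ℤ → ℝ) * M.map Int.cast = 1 := by
    have := congrArg (Int.castRingHom ℝ).mapMatrix (nonsing_inv_mul M hM)
    rwa [map_mul, map_one] at this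
  refine ⟨(M⁻¹ *ᵥ w) (Sum.inl i), ?_⟩
  calc x i = ((M⁻¹.map (Int.cast : ℤ → ℝ) * M.map Int.cast) *ᵥ Sum.elim x 0) (Sum.inl i) := by
        rw [hinv, one_mulVec, Sum.elim_inl]
    _ = _ := by rw [← mulVec_mulVec, hMx, map_intCast_mulVec]

theorem isTorusEmbedding_iff_exists_isUnit_det_toCols₁_eq {κ : Type*} [Fintype κ]
    [DecidableEq κ] {n : ℕ} {L : Matrix (Fin n ⊕ κ) (Fin n) ℤ} :
    IsTorusEmbedding L ↔ ∃ M : Matrix (Fin n ⊕ κ) (Fin n ⊕ κ) ℤ, IsUnit M.det ∧ M.toCols₁ = L := by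
  constructor
  · intro hL
    have := hL.isTorsionFree
    exact L.exists_isUnit_det_toCols₁_eq hL.injective_mulVecLin
  · rintro ⟨M, hM, rfl⟩
    exact isTorusEmbedding_toCols₁_of_isUnit_det hM

theorem stmt16_general {n k : ℕ}
    (A B : Matrix (Fin n) (Fin n) ℤ) (hB : IsUnit B.det) :
    (∃ L : Matrix (Fin n ⊕ Fin n × Fin (k - 1)) (Fin n) ℤ, IsTorusEmbedding L ∧
      Matrix.fromBlocks B 0 0 (Matrix.blockDiagonal fun _ : Fin (k - 1) => B) * L
        = L * A)
    ↔ (∃ M : Matrix (Fin n ⊕ Fin n × Fin (k - 1)) (Fin n ⊕ Fin n × Fin (k - 1)) ℤ,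
        IsUnit M.det ∧
        ∃ S : Matrix (Fin n) (Fin n × Fin (k - 1)) ℤ,
        ∃ A' : Matrix (Fin n × Fin (k - 1)) (Fin n × Fin (k - 1)) ℤ, IsUnit A'.det ∧
          Matrix.fromBlocks B 0 0 (Matrix.blockDiagonal fun _ : Fin (k - 1) => B) * M
            = M * Matrix.fromBlocks A S 0 A') := by
  have hD : IsUnit (fromBlocks B 0 0 (blockDiagonal fun _ : Fin (k - 1) => B)).det := by
    rw [det_fromBlocks_zero₂₁, det_blockDiagonal, Finset.prod_const]
    exact hB.mul (hB.pow _)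
  constructor
  · rintro ⟨L, hL, hDL⟩
    obtain ⟨M, hM, rfl⟩ := isTorusEmbedding_iff_exists_isUnit_det_toCols₁_eq.1 hL
    obtain ⟨S, A', h⟩ := (mul_toCols₁_eq_iff hM A).1 hDL
    exact ⟨M, hM, S, A', isUnit_det_of_mul_eq_mul_fromBlocks hD hM h, h⟩
  · rintro ⟨M, hM, S, A', -, h⟩
    exact ⟨M.toCols₁, isTorusEmbedding_iff_exists_isUnit_det_toCols₁_eq.2 ⟨M, hM, rfl⟩,
      (mul_toCols₁_eq_iff hM A).2 ⟨S, A', h⟩⟩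

/-- There exists a semiconjugacy from `A` to `⊕ᵢ₌₁ᵏ B` by a linear embedding
`ι : T^n → T^{nk}` (i.e. `ι ∘ A = (⊕ᵢ₌₁ᵏ B) ∘ ι` with `ι` an injective linear map)
if and only if there exist `M ∈ GL_{nk}(ℤ)`, an integer matrix `S` and
`A' ∈ GL_{n(k-1)}(ℤ)` with `(⊕ᵢ₌₁ᵏ B) M = M [[A, S], [0, A']]`. Here `⊕ᵢ₌₁ᵏ B` is
written on the index type `Fin n ⊕ (Fin n × Fin (k-1))`. -/
theorem stmt16 {n k : ℕ} (hn : 0 < n) (hk : 1 ≤ k)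
    (A B : Matrix (Fin n) (Fin n) ℤ) (hA : IsUnit A.det) (hB : IsUnit B.det) :
    (∃ L : Matrix (Fin n ⊕ Fin n × Fin (k - 1)) (Fin n) ℤ, IsTorusEmbedding L ∧
      Matrix.fromBlocks B 0 0 (Matrix.blockDiagonal fun _ : Fin (k - 1) => B) * L
        = L * A)
    ↔ (∃ M : Matrix (Fin n ⊕ Fin n × Fin (k - 1)) (Fin n ⊕ Fin n × Fin (k - 1)) ℤ,
        IsUnit M.det ∧
        ∃ S : Matrix (Fin n) (Fin n × Fin (k - 1)) ℤ,
        ∃ A' : Matrix (Fin n × Fin (k - 1)) (Fin n × Fin (k - 1)) ℤ, IsUnit A'.det ∧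
          Matrix.fromBlocks B 0 0 (Matrix.blockDiagonal fun _ : Fin (k - 1) => B) * M
            = M * Matrix.fromBlocks A S 0 A') :=
  stmt16_general A B hB
end

section
/- Let B ∈ GL_n(Z) be irreducible with eigenvector v, Bv = βv, and let U = [[U₁,U₂],[U₃,U₄]] ∈ GL_{2n}(Z) commute with B ⊕ B. Then each U_i commutes with B, det(U) = det(U₁U₄ − U₂U₃), and writing U_i v = α_i v with α_i in R = (J:J), the element α₁α₄ − α₂α₃ is a unit in R if and only if det(U) = ±1. -/
open Polynomial

theorem Module.End.exists_eq_aeval_of_commute_of_irreducible_charpoly {F V : Type*} [Field F]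
    [AddCommGroup V] [Module F V] [FiniteDimensional F V] {f T : Module.End F V}
    (hf : Irreducible f.charpoly) (hT : Commute T f) : ∃ g : F[X], T = aeval f g := by
  have := Fact.mk hf
  let L := AdjoinRoot f.charpoly
  let φ : L →ₐ[F] Module.End F V := Ideal.Quotient.liftₐ _ (aeval f) fun p hp => by
    obtain ⟨q, rfl⟩ := Ideal.mem_span_singleton'.1 hp
    rw [map_mul, LinearMap.aeval_self_charpoly, mul_zero]
  have hφ (g : F[X]) : φ (AdjoinRoot.mk _ g) = aeval f g := rfl
  let _ : Module L V := Module.compHom V φ.toRingHom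
  have : IsScalarTower F L V :=
    ⟨fun a x w => show φ (a • x) w = a • φ x w by rw [map_smul]; rfl⟩
  have hone : Module.finrank L V = 1 := by
    have hmul := Module.finrank_mul_finrank F L V
    have hpos : 0 < Module.finrank F V := by
      rw [← LinearMap.charpoly_natDegree f]; exact hf.natDegree_pos
    rwa [(AdjoinRoot.powerBasis hf.ne_zero).finrank, AdjoinRoot.powerBasis_dim,
      LinearMap.charpoly_natDegree, Nat.mul_eq_left hpos.ne'] at hmul
  let T' : V →ₗ[L] V :=
    { T.toAddHom with
      map_smul' := fun x w => by
        induction x using AdjoinRoot.induction_on with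
        | ih g =>
          show T (φ (AdjoinRoot.mk _ g) w) = φ (AdjoinRoot.mk _ g) (T w)
          rw [hφ]
          exact LinearMap.congr_fun (Algebra.commute_of_mem_adjoin_singleton_of_commute
            (aeval_mem_adjoin_singleton F f) hT).eq w }
  obtain ⟨c, hc, -⟩ := T'.existsUnique_eq_smul_id_of_finrank_eq_one hone
  obtain ⟨g, rfl⟩ := AdjoinRoot.mk_surjective c
  refine ⟨g, LinearMap.ext fun w => ?_⟩
  rw [← hφ]
  exact LinearMap.congr_fun hc w

theorem mem_colonSub_of_mulVec_eq_smul {ι K : Type*} [Fintype ι] [Field K] {W : Matrix ι ι ℤ}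
    {v : ι → K} {α : K} (hW : Matrix.mulVec (W.map (algebraMap ℤ K)) v = α • v) :
    α ∈ colonSub (Submodule.span ℤ (Set.range v)) (Submodule.span ℤ (Set.range v)) := by
  have hgen (j : ι) : α * v j ∈ Submodule.span ℤ (Set.range v) := by
    refine (Submodule.mem_span_range_iff_exists_fun ℤ).2 ⟨W j, ?_⟩
    have := congrFun hW j
    simp only [Matrix.mulVec, dotProduct, Matrix.map_apply, Pi.smul_apply, smul_eq_mul] at this
    simp [← this, zsmul_eq_mul]
  intro y hy
  exact Submodule.span_le (p := (Submodule.span ℤ (Set.range v)).comap (LinearMap.mulLeft ℤ α))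
    |>.2 (Set.range_subset_iff.2 hgen) hy

namespace Matrix

variable {ι : Type*} [Fintype ι]

theorem commute_fromBlocks_diagonal_iff {R : Type*} [Semiring R] (U₁ U₂ U₃ U₄ B : Matrix ι ι R) :
    Commute (fromBlocks U₁ U₂ U₃ U₄) (fromBlocks B 0 0 B) ↔
      Commute U₁ B ∧ Commute U₂ B ∧ Commute U₃ B ∧ Commute U₄ B := by
  simp only [Commute, SemiconjBy, fromBlocks_multiply, fromBlocks_inj, Matrix.mul_zero,
    Matrix.zero_mul, add_zero, zero_add]

theorem mulVec_mul_sub_mul_eq_smul {S : Type*} [CommRing S] {M₁ M₂ M₃ M₄ : Matrix ι ι S}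
    {v : ι → S} {a₁ a₂ a₃ a₄ : S} (h₁ : M₁ *ᵥ v = a₁ • v) (h₂ : M₂ *ᵥ v = a₂ • v)
    (h₃ : M₃ *ᵥ v = a₃ • v) (h₄ : M₄ *ᵥ v = a₄ • v) :
    (M₁ * M₄ - M₂ * M₃) *ᵥ v = (a₁ * a₄ - a₂ * a₃) • v := by
  rw [sub_mulVec, ← mulVec_mulVec, ← mulVec_mulVec, h₄, h₃, mulVec_smul, mulVec_smul, h₁, h₂]
  module

variable [DecidableEq ι]

theorem det_fromBlocks_mul_det_of_commute {R : Type*} [CommRing R] (A B C D : Matrix ι ι R)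
    (hCD : Commute C D) :
    (fromBlocks A B C D).det * D.det = (A * D - B * C).det * D.det := by
  have h : fromBlocks A B C D * fromBlocks D 0 (-C) 1 = fromBlocks (A * D - B * C) B 0 D := by
    rw [fromBlocks_multiply, hCD.eq]
    simp [sub_eq_add_neg]
  simpa [det_fromBlocks_zero₁₂, det_fromBlocks_zero₂₁] using congrArg det h

theorem det_fromBlocks_of_commute {R : Type*} [CommRing R] (A B C D : Matrix ι ι R)
    (hCD : Commute C D) : (fromBlocks A B C D).det = (A * D - B * C).det := by
  let Dₓ := charmatrix (-D)
  have hCDₓ : Commute (C.map Polynomial.C) Dₓ := by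
    simp only [Dₓ, charmatrix, map_neg]
    exact ((scalar_commute _ (Commute.all _) _).symm).sub_right
      ((hCD.map Polynomial.C.mapMatrix).neg_right)
  have hX := det_fromBlocks_mul_det_of_commute (A.map Polynomial.C) (B.map Polynomial.C)
    (C.map Polynomial.C) Dₓ hCDₓ
  have hpoly := (charpoly_monic (-D)).isRegular.right hX
  have hC (M : Matrix ι ι R) : (M.map Polynomial.C).map (evalRingHom 0) = M := by ext; simp
  have hD : Dₓ.map (evalRingHom 0) = D := by ext i j; by_cases h : i = j <;> simp [Dₓ, h]
  have := congrArg (evalRingHom (0 : R)) hpoly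
  simp only [RingHom.map_det, map_sub, map_mul] at this
  simpa only [RingHom.mapMatrix_apply, fromBlocks_map, hC, hD] using this

theorem exists_eq_aeval_of_commute_of_irreducible_charpoly {F : Type*} [Field F]
    {M T : Matrix ι ι F} (hM : Irreducible M.charpoly) (hT : Commute T M) :
    ∃ g : F[X], T = aeval M g := by
  obtain ⟨g, hg⟩ := Module.End.exists_eq_aeval_of_commute_of_irreducible_charpoly
    (f := toLinAlgEquiv' M) (by rwa [← charpoly_toLin'] at hM) (hT.map _)
  exact ⟨g, toLinAlgEquiv'.injective (by rw [hg, aeval_algHom_apply])⟩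

theorem commute_of_commute_of_irreducible_charpoly {F : Type*} [Field F]
    {M S T : Matrix ι ι F} (hM : Irreducible M.charpoly) (hS : Commute S M)
    (hT : Commute T M) : Commute S T := by
  obtain ⟨g, rfl⟩ := exists_eq_aeval_of_commute_of_irreducible_charpoly hM hS
  obtain ⟨h, rfl⟩ := exists_eq_aeval_of_commute_of_irreducible_charpoly hM hT
  exact Commute.map (Commute.all g h) (aeval M)

theorem aeval_mulVec_of_mulVec_eq_smul {R S : Type*} [CommSemiring R] [CommRing S] [Algebra R S]
    {M : Matrix ι ι S} {v : ι → S} {β : S} (hv : M *ᵥ v = β • v) (p : R[X]) :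
    aeval M p *ᵥ v = aeval β p • v := by
  induction p using Polynomial.induction_on' with
  | add p q hp hq => rw [map_add, map_add, add_mulVec, hp, hq, add_smul]
  | monomial k a =>
    have hpow : (M ^ k) *ᵥ v = β ^ k • v := by
      induction k with
      | zero => simp
      | succ k ih =>
        rw [pow_succ, ← mulVec_mulVec, hv, mulVec_smul, ih, smul_smul, pow_succ']
    rw [aeval_monomial, aeval_monomial, Algebra.algebraMap_eq_smul_one, smul_mul_assoc,
      one_mul, smul_mulVec, hpow, Algebra.algebraMap_eq_smul_one, smul_mul_assoc, one_mul,
      smul_assoc]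

theorem commute_of_commute_of_irreducible_charpoly_map {B S T : Matrix ι ι ℤ}
    (hB : Irreducible (B.charpoly.map (Int.castRingHom ℚ))) (hS : Commute S B)
    (hT : Commute T B) : Commute S T := by
  rw [← charpoly_map] at hB
  have := commute_of_commute_of_irreducible_charpoly hB
    (hS.map (Int.castRingHom ℚ).mapMatrix) (hT.map (Int.castRingHom ℚ).mapMatrix)
  rw [Commute, SemiconjBy, ← map_mul, ← map_mul] at this
  exact map_injective Int.cast_injective this

theorem exists_mulVec_eq_smul_of_commute {K : Type*} [Field K] [CharZero K]
    {B U : Matrix ι ι ℤ} (hB : Irreducible (B.charpoly.map (Int.castRingHom ℚ)))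
    (hU : Commute U B) {β : K} {v : ι → K} (hv : B.map (algebraMap ℤ K) *ᵥ v = β • v) :
    ∃ α : K, U.map (algebraMap ℤ K) *ᵥ v = α • v := by
  rw [← charpoly_map] at hB
  obtain ⟨g, hg⟩ := exists_eq_aeval_of_commute_of_irreducible_charpoly hB
    (hU.map (Int.castRingHom ℚ).mapMatrix)
  have hK (M : Matrix ι ι ℤ) :
      M.map (algebraMap ℤ K) = (Algebra.ofId ℚ K).mapMatrix (M.map (Int.castRingHom ℚ)) := by
    ext; simp
  have hg' : U.map (Int.castRingHom ℚ) = aeval (B.map (Int.castRingHom ℚ)) g := hg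
  rw [hK] at hv
  rw [hK, hg', ← aeval_algHom_apply]
  exact ⟨aeval β g, aeval_mulVec_of_mulVec_eq_smul hv g⟩

theorem mul_eq_one_of_mulVec_eq_smul {K : Type*} [Field K] {M N : Matrix ι ι K} {v : ι → K}
    {a b : K} (hMN : M * N = 1) (hM : M *ᵥ v = a • v) (hN : N *ᵥ v = b • v) (hv : v ≠ 0) :
    a * b = 1 := by
  have h : (M * N) *ᵥ v = (a * b) • v := by
    rw [← mulVec_mulVec, hN, mulVec_smul, hM, smul_smul, mul_comm]
  rw [hMN, one_mulVec] at h
  exact smul_left_injective K hv (show (a * b) • v = (1 : K) • v by rw [one_smul, ← h])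

theorem exists_mul_eq_one_mem_colonSub {K : Type*} [Field K] [CharZero K] {B W : Matrix ι ι ℤ}
    (hB : Irreducible (B.charpoly.map (Int.castRingHom ℚ))) (hW : IsUnit W.det)
    (hWB : Commute W B) {β : K} {v : ι → K} (hv : B.map (algebraMap ℤ K) *ᵥ v = β • v)
    (hv0 : v ≠ 0) {α : K} (hα : W.map (algebraMap ℤ K) *ᵥ v = α • v) :
    ∃ y ∈ colonSub (Submodule.span ℤ (Set.range v)) (Submodule.span ℤ (Set.range v)),
      α * y = 1 := by
  obtain ⟨u, rfl⟩ := (isUnit_iff_isUnit_det W).2 hW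
  obtain ⟨γ, hγ⟩ := exists_mulVec_eq_smul_of_commute hB hWB.units_inv_left hv
  refine ⟨γ, mem_colonSub_of_mulVec_eq_smul hγ, mul_eq_one_of_mulVec_eq_smul ?_ hα hγ hv0⟩
  simp only [← RingHom.mapMatrix_apply, ← map_mul, u.mul_inv, map_one]

end Matrix

theorem stmt17_general {K : Type*} [Field K] [CharZero K] {n : ℕ}
    (B : Matrix (Fin n) (Fin n) ℤ)
    (hirr : Irreducible (Polynomial.map (Int.castRingHom ℚ) B.charpoly))
    (β : K)
    (v : Fin n → K) (hv0 : v ≠ 0)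
    (hv : Matrix.mulVec (B.map (algebraMap ℤ K)) v = β • v)
    (U₁ U₂ U₃ U₄ : Matrix (Fin n) (Fin n) ℤ)
    (hU : IsUnit (Matrix.fromBlocks U₁ U₂ U₃ U₄).det)
    (hcomm : Matrix.fromBlocks U₁ U₂ U₃ U₄ * Matrix.fromBlocks B 0 0 B
      = Matrix.fromBlocks B 0 0 B * Matrix.fromBlocks U₁ U₂ U₃ U₄) :
    (U₁ * B = B * U₁ ∧ U₂ * B = B * U₂ ∧ U₃ * B = B * U₃ ∧ U₄ * B = B * U₄) ∧
    (Matrix.fromBlocks U₁ U₂ U₃ U₄).det = (U₁ * U₄ - U₂ * U₃).det ∧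
    ∃ α₁ α₂ α₃ α₄ : K,
      (Matrix.mulVec (U₁.map (algebraMap ℤ K)) v = α₁ • v ∧
       Matrix.mulVec (U₂.map (algebraMap ℤ K)) v = α₂ • v ∧
       Matrix.mulVec (U₃.map (algebraMap ℤ K)) v = α₃ • v ∧
       Matrix.mulVec (U₄.map (algebraMap ℤ K)) v = α₄ • v) ∧
      (∀ i ∈ [α₁, α₂, α₃, α₄],
        i ∈ colonSub (Submodule.span ℤ (Set.range v)) (Submodule.span ℤ (Set.range v))) ∧
      ((∃ y ∈ colonSub (Submodule.span ℤ (Set.range v)) (Submodule.span ℤ (Set.range v)),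
          (α₁ * α₄ - α₂ * α₃) * y = 1)
        ↔ IsUnit (Matrix.fromBlocks U₁ U₂ U₃ U₄).det) := by
  obtain ⟨h₁, h₂, h₃, h₄⟩ := (Matrix.commute_fromBlocks_diagonal_iff U₁ U₂ U₃ U₄ B).1 hcomm
  have hdet := Matrix.det_fromBlocks_of_commute U₁ U₂ U₃ U₄
    (Matrix.commute_of_commute_of_irreducible_charpoly_map hirr h₃ h₄)
  obtain ⟨α₁, e₁⟩ := Matrix.exists_mulVec_eq_smul_of_commute hirr h₁ hv
  obtain ⟨α₂, e₂⟩ := Matrix.exists_mulVec_eq_smul_of_commute hirr h₂ hv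
  obtain ⟨α₃, e₃⟩ := Matrix.exists_mulVec_eq_smul_of_commute hirr h₃ hv
  obtain ⟨α₄, e₄⟩ := Matrix.exists_mulVec_eq_smul_of_commute hirr h₄ hv
  have hWB : Commute (U₁ * U₄ - U₂ * U₃) B := (h₁.mul_left h₄).sub_left (h₂.mul_left h₃)
  have hW := Matrix.mulVec_mul_sub_mul_eq_smul e₁ e₂ e₃ e₄
  simp only [← RingHom.mapMatrix_apply, ← map_mul, ← map_sub] at hW
  refine ⟨⟨h₁.eq, h₂.eq, h₃.eq, h₄.eq⟩, hdet, α₁, α₂, α₃, α₄, ⟨e₁, e₂, e₃, e₄⟩, ?_,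
    fun _ => hU, fun _ => Matrix.exists_mul_eq_one_mem_colonSub hirr (hdet ▸ hU) hWB hv hv0 hW⟩
  simpa using ⟨mem_colonSub_of_mulVec_eq_smul e₁, mem_colonSub_of_mulVec_eq_smul e₂,
    mem_colonSub_of_mulVec_eq_smul e₃, mem_colonSub_of_mulVec_eq_smul e₄⟩

/-- Let `B ∈ GL_n(ℤ)` be irreducible with eigenvector `v`, `Bv = βv`, and let
`U = [[U₁,U₂],[U₃,U₄]] ∈ GL_{2n}(ℤ)` commute with `B ⊕ B`. Then each `Uᵢ` commutes with
`B`, `det U = det (U₁U₄ − U₂U₃)`, and writing `Uᵢ v = αᵢ v` with `αᵢ ∈ R = (J : J)`,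
the element `α₁α₄ − α₂α₃` is a unit in `R` if and only if `det U = ±1`. -/
theorem stmt17 {K : Type*} [Field K] [CharZero K] {n : ℕ} (hn : 0 < n)
    (B : Matrix (Fin n) (Fin n) ℤ) (hB : IsUnit B.det)
    (hirr : Irreducible (Polynomial.map (Int.castRingHom ℚ) B.charpoly))
    (β : K) (hβ : Polynomial.aeval β B.charpoly = 0)
    (v : Fin n → K) (hv0 : v ≠ 0)
    (hv : Matrix.mulVec (B.map (algebraMap ℤ K)) v = β • v)
    (U₁ U₂ U₃ U₄ : Matrix (Fin n) (Fin n) ℤ)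
    (hU : IsUnit (Matrix.fromBlocks U₁ U₂ U₃ U₄).det)
    (hcomm : Matrix.fromBlocks U₁ U₂ U₃ U₄ * Matrix.fromBlocks B 0 0 B
      = Matrix.fromBlocks B 0 0 B * Matrix.fromBlocks U₁ U₂ U₃ U₄) :
    (U₁ * B = B * U₁ ∧ U₂ * B = B * U₂ ∧ U₃ * B = B * U₃ ∧ U₄ * B = B * U₄) ∧
    (Matrix.fromBlocks U₁ U₂ U₃ U₄).det = (U₁ * U₄ - U₂ * U₃).det ∧
    ∃ α₁ α₂ α₃ α₄ : K,
      (Matrix.mulVec (U₁.map (algebraMap ℤ K)) v = α₁ • v ∧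
       Matrix.mulVec (U₂.map (algebraMap ℤ K)) v = α₂ • v ∧
       Matrix.mulVec (U₃.map (algebraMap ℤ K)) v = α₃ • v ∧
       Matrix.mulVec (U₄.map (algebraMap ℤ K)) v = α₄ • v) ∧
      (∀ i ∈ [α₁, α₂, α₃, α₄],
        i ∈ colonSub (Submodule.span ℤ (Set.range v)) (Submodule.span ℤ (Set.range v))) ∧
      ((∃ y ∈ colonSub (Submodule.span ℤ (Set.range v)) (Submodule.span ℤ (Set.range v)),
          (α₁ * α₄ - α₂ * α₃) * y = 1)
        ↔ IsUnit (Matrix.fromBlocks U₁ U₂ U₃ U₄).det) :=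
  stmt17_general B hirr β v hv0 hv U₁ U₂ U₃ U₄ hU hcomm
end

section
/- Let B ∈ GL_n(Z) be irreducible. If ξ ∈ GL_{2n}(Z) satisfies (B ⊕ B)ξ = ξ(B⁻¹ ⊕ B⁻¹), then for every M ∈ GL_{2n}(Z) such that M⁻¹(B ⊕ B)M is block diagonal (of n×n blocks), both (ξM)⁻¹(B ⊕ B)(ξM) and (ξ⁻¹M)⁻¹(B ⊕ B)(ξ⁻¹M) are block diagonal; moreover ξ does not commute with B ⊕ B provided B ≠ B⁻¹. -/
/-!
Write `D = B ⊕ B`. The relation says that `ξ` conjugates `D` to `D⁻¹`, and so does `ξ⁻¹`.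
Hence `(ξM)⁻¹ D (ξM) = M⁻¹ D⁻¹ M = (M⁻¹ D M)⁻¹`, the inverse of a block diagonal matrix, which is
again block diagonal; likewise for `ξ⁻¹M`. If `ξ` also commuted with `D`, cancelling `ξ` would
give `D = D⁻¹`, i.e. `B = B⁻¹`.
-/

namespace Matrix

def IsBlockDiagonal {m n α : Type*} [Zero α] (X : Matrix (m ⊕ n) (m ⊕ n) α) : Prop :=
  ∃ P Q, X = fromBlocks P 0 0 Q

variable {m n ι α : Type*} [Fintype m] [DecidableEq m] [Fintype n] [DecidableEq n]
  [Fintype ι] [DecidableEq ι] [CommRing α]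

theorem inv_fromBlocks_zero_zero (P : Matrix m m α) (Q : Matrix n n α)
    (hPQ : IsUnit P ↔ IsUnit Q) :
    (fromBlocks P 0 0 Q)⁻¹ = fromBlocks P⁻¹ 0 0 Q⁻¹ := by
  simpa using inv_fromBlocks_zero₁₂_of_isUnit_iff P 0 Q hPQ

theorem IsBlockDiagonal.inv {X : Matrix (m ⊕ n) (m ⊕ n) α} (hX : X.IsBlockDiagonal) :
    X⁻¹.IsBlockDiagonal := by
  obtain ⟨P, Q, rfl⟩ := hX
  by_cases hPQ : IsUnit P ↔ IsUnit Q
  · exact ⟨P⁻¹, Q⁻¹, inv_fromBlocks_zero_zero P Q hPQ⟩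
  -- otherwise the matrix is singular and its inverse is the junk value `0`
  · have hX : ¬IsUnit (fromBlocks P 0 0 Q).det := by
      rw [← isUnit_iff_isUnit_det, isUnit_fromBlocks_zero₁₂]
      exact fun h => hPQ (iff_of_true h.1 h.2)
    exact ⟨0, 0, by rw [nonsing_inv_apply_not_isUnit _ hX, fromBlocks_zero]⟩

theorem mul_inv_mul_mul (X M A : Matrix ι ι α) :
    (X * M)⁻¹ * A * (X * M) = M⁻¹ * (X⁻¹ * A * X) * M := by
  simp only [mul_inv_rev, Matrix.mul_assoc]

theorem inv_mul_inv_mul {M : Matrix ι ι α} (hM : IsUnit M.det) (A : Matrix ι ι α) :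
    M⁻¹ * A⁻¹ * M = (M⁻¹ * A * M)⁻¹ := by
  rw [mul_inv_rev, mul_inv_rev, nonsing_inv_nonsing_inv M hM, Matrix.mul_assoc]

theorem inv_mul_mul_eq_inv_of_mul_eq {X A : Matrix ι ι α} (hX : IsUnit X.det)
    (h : A * X = X * A⁻¹) : X⁻¹ * A * X = A⁻¹ := by
  rw [Matrix.mul_assoc, h, nonsing_inv_mul_cancel_left _ _ hX]

theorem mul_mul_inv_eq_inv_of_mul_eq {X A : Matrix ι ι α} (hX : IsUnit X.det)
    (hA : IsUnit A.det) (h : A * X = X * A⁻¹) : X * A * X⁻¹ = A⁻¹ := by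
  have hinv : X⁻¹ * A⁻¹ * X = A := by
    rw [inv_mul_inv_mul hX, inv_mul_mul_eq_inv_of_mul_eq hX h, nonsing_inv_nonsing_inv A hA]
  calc X * A * X⁻¹ = X * (X⁻¹ * A⁻¹ * X) * X⁻¹ := by rw [hinv]
    _ = A⁻¹ := by
      rw [Matrix.mul_assoc X⁻¹, mul_nonsing_inv_cancel_left _ _ hX,
        mul_nonsing_inv_cancel_right _ _ hX]

theorem eq_inv_of_mul_eq_of_commute {X A : Matrix ι ι α} (hX : IsUnit X.det)
    (h : A * X = X * A⁻¹) (hcomm : A * X = X * A) : A = A⁻¹ := by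
  simpa only [nonsing_inv_mul_cancel_left _ _ hX] using congrArg (X⁻¹ * ·) (hcomm.symm.trans h)

theorem isBlockDiagonal_mul_inv_mul_mul {X M A : Matrix (m ⊕ n) (m ⊕ n) α}
    (hM : IsUnit M.det) (hX : X⁻¹ * A * X = A⁻¹) (hA : (M⁻¹ * A * M).IsBlockDiagonal) :
    ((X * M)⁻¹ * A * (X * M)).IsBlockDiagonal := by
  rw [mul_inv_mul_mul, hX, inv_mul_inv_mul hM]
  exact hA.inv

end Matrix

open Matrix

theorem stmt18_general {n : ℕ}
    (B : Matrix (Fin n) (Fin n) ℤ) (hB : IsUnit B.det)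
    (ξ : Matrix (Fin n ⊕ Fin n) (Fin n ⊕ Fin n) ℤ) (hξ : IsUnit ξ.det)
    (hrel : Matrix.fromBlocks B 0 0 B * ξ = ξ * Matrix.fromBlocks B⁻¹ 0 0 B⁻¹) :
    (∀ M : Matrix (Fin n ⊕ Fin n) (Fin n ⊕ Fin n) ℤ, IsUnit M.det →
      (∃ P Q : Matrix (Fin n) (Fin n) ℤ,
        M⁻¹ * Matrix.fromBlocks B 0 0 B * M = Matrix.fromBlocks P 0 0 Q) →
      ((∃ P Q : Matrix (Fin n) (Fin n) ℤ,
          (ξ * M)⁻¹ * Matrix.fromBlocks B 0 0 B * (ξ * M) = Matrix.fromBlocks P 0 0 Q) ∧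
       (∃ P Q : Matrix (Fin n) (Fin n) ℤ,
          (ξ⁻¹ * M)⁻¹ * Matrix.fromBlocks B 0 0 B * (ξ⁻¹ * M)
            = Matrix.fromBlocks P 0 0 Q))) ∧
    (B ≠ B⁻¹ →
      Matrix.fromBlocks B 0 0 B * ξ ≠ ξ * Matrix.fromBlocks B 0 0 B) := by
  set D := fromBlocks B 0 0 B
  have hDinv : D⁻¹ = fromBlocks B⁻¹ 0 0 B⁻¹ := inv_fromBlocks_zero_zero B B Iff.rfl
  have hD : IsUnit D.det := by
    rw [det_fromBlocks_zero₁₂]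
    exact hB.mul hB
  rw [← hDinv] at hrel
  have hξD : ξ⁻¹ * D * ξ = D⁻¹ := inv_mul_mul_eq_inv_of_mul_eq hξ hrel
  have hξinvD : ξ⁻¹⁻¹ * D * ξ⁻¹ = D⁻¹ := by
    rw [nonsing_inv_nonsing_inv ξ hξ]
    exact mul_mul_inv_eq_inv_of_mul_eq hξ hD hrel
  refine ⟨fun M hM hMD => ⟨isBlockDiagonal_mul_inv_mul_mul hM hξD hMD,
    isBlockDiagonal_mul_inv_mul_mul hM hξinvD hMD⟩, fun hBB hcomm => hBB ?_⟩
  have hDD : D = D⁻¹ := eq_inv_of_mul_eq_of_commute hξ hrel hcomm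
  rw [hDinv] at hDD
  exact (fromBlocks_inj.mp hDD).1

/-- Let `B ∈ GL_n(ℤ)` be irreducible. If `ξ ∈ GL_{2n}(ℤ)` satisfies
`(B ⊕ B) ξ = ξ (B⁻¹ ⊕ B⁻¹)`, then for every `M ∈ GL_{2n}(ℤ)` such that
`M⁻¹ (B ⊕ B) M` is block diagonal (in `n × n` blocks), both
`(ξM)⁻¹ (B ⊕ B) (ξM)` and `(ξ⁻¹M)⁻¹ (B ⊕ B) (ξ⁻¹M)` are block diagonal; moreover
`ξ` does not commute with `B ⊕ B` provided `B ≠ B⁻¹`. -/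
theorem stmt18 {n : ℕ} (hn : 0 < n)
    (B : Matrix (Fin n) (Fin n) ℤ) (hB : IsUnit B.det)
    (hirr : Irreducible (Polynomial.map (Int.castRingHom ℚ) B.charpoly))
    (ξ : Matrix (Fin n ⊕ Fin n) (Fin n ⊕ Fin n) ℤ) (hξ : IsUnit ξ.det)
    (hrel : Matrix.fromBlocks B 0 0 B * ξ = ξ * Matrix.fromBlocks B⁻¹ 0 0 B⁻¹) :
    (∀ M : Matrix (Fin n ⊕ Fin n) (Fin n ⊕ Fin n) ℤ, IsUnit M.det →
      (∃ P Q : Matrix (Fin n) (Fin n) ℤ,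
        M⁻¹ * Matrix.fromBlocks B 0 0 B * M = Matrix.fromBlocks P 0 0 Q) →
      ((∃ P Q : Matrix (Fin n) (Fin n) ℤ,
          (ξ * M)⁻¹ * Matrix.fromBlocks B 0 0 B * (ξ * M) = Matrix.fromBlocks P 0 0 Q) ∧
       (∃ P Q : Matrix (Fin n) (Fin n) ℤ,
          (ξ⁻¹ * M)⁻¹ * Matrix.fromBlocks B 0 0 B * (ξ⁻¹ * M)
            = Matrix.fromBlocks P 0 0 Q))) ∧
    (B ≠ B⁻¹ →
      Matrix.fromBlocks B 0 0 B * ξ ≠ ξ * Matrix.fromBlocks B 0 0 B) :=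
  stmt18_general B hB ξ hξ hrel
end
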